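/- arXiv:math/0606448 — 11 statements merged into one kernel-verified Lean document; each statement's English description precedes it below -/
import Mathlib

section
/- Let K be a commutative unital ring and M a K-module. Two flags e = (e_1, …, e_k) and f = (f_1, …, f_k) of length k in M are transversal if and only if they are derived from a grading of M, i.e. if and only if there exists a family of submodules g_1, …, g_k of M such that M is the internal direct sum g_1 ⊕ … ⊕ g_k, e_j = g_1 + … + g_j for all j, and f_i = g_{k−i+1} + … + g_k for all i. Moreover, if e and f are transversal then the corresponding grading is given by g_j = e_j ∩ f_{k+1−j} for j = 1, …, k. -/
/-- A flag of length `k` in the `K`-module `M`: an ascending chain of submodules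
`0 = f 0 ⊆ f 1 ⊆ … ⊆ f k = M`. -/
def IsFlag {K M : Type*} [CommRing K] [AddCommGroup M] [Module K M]
    (k : ℕ) (f : ℕ → Submodule K M) : Prop :=
  f 0 = ⊥ ∧ f k = ⊤ ∧ ∀ i j : ℕ, i ≤ j → j ≤ k → f i ≤ f j

/-- Two flags of length `k` are transversal if `e i` and `f (k - i)` are complementary
for every `i = 0, …, k`. -/
def Transversal {K M : Type*} [CommRing K] [AddCommGroup M] [Module K M]
    (k : ℕ) (e f : ℕ → Submodule K M) : Prop :=
  ∀ i ≤ k, IsCompl (e i) (f (k - i))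

/-- The submodules `g 1, …, g k` form a grading of `M`, i.e. `M` is their internal
direct sum. -/
def IsGrading {K M : Type*} [CommRing K] [AddCommGroup M] [Module K M]
    (k : ℕ) (g : ℕ → Submodule K M) : Prop :=
  (Finset.Icc 1 k).sup g = ⊤ ∧
    ∀ j ∈ Finset.Icc 1 k, Disjoint (g j) (((Finset.Icc 1 k).erase j).sup g)

/-- The pair of flags `(e, f)` is derived from the grading `g`:
`e j = g 1 + … + g j` and `f i = g (k - i + 1) + … + g k`. -/
def DerivedFrom {K M : Type*} [CommRing K] [AddCommGroup M] [Module K M]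
    (k : ℕ) (e f g : ℕ → Submodule K M) : Prop :=
  IsGrading k g ∧ (∀ j ≤ k, e j = (Finset.Icc 1 j).sup g) ∧
    (∀ i ≤ k, f i = (Finset.Icc (k - i + 1) k).sup g)

/-- In a modular lattice, a `SupIndep` family has disjoint sups over disjoint index sets. -/
lemma aux_supIndep_disjoint_sup {α ι : Type*} [Lattice α] [OrderBot α] [IsModularLattice α]
    [DecidableEq ι] {s : Finset ι} {g : ι → α} (hs : s.SupIndep g) :
    ∀ t₂ t₁ : Finset ι, t₁ ⊆ s → t₂ ⊆ s → Disjoint t₁ t₂ →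
      Disjoint (t₁.sup g) (t₂.sup g) := by
  intro t₂
  induction t₂ using Finset.induction_on with
  | empty => intro t₁ _ _ _; simp
  | @insert a t₂' ha ih =>
    intro t₁ ht₁ ht₂ hd
    rw [Finset.sup_insert]
    have ha' : a ∈ s := ht₂ (Finset.mem_insert_self a t₂')
    have hat₁ : a ∉ t₁ := fun h => (Finset.disjoint_left.mp hd h) (Finset.mem_insert_self a t₂')
    have h1 : Disjoint (t₁.sup g) (g a) := (hs ht₁ ha' hat₁).symm
    have h2 : Disjoint (t₁.sup g ⊔ g a) (t₂'.sup g) := by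
      have := ih (insert a t₁) (Finset.insert_subset ha' ht₁)
        (Finset.Subset.trans (Finset.subset_insert a t₂') ht₂) (by
          rw [Finset.disjoint_left]
          intro x hx hx'
          rcases Finset.mem_insert.mp hx with rfl | hx
          · exact ha hx'
          · exact Finset.disjoint_left.mp hd hx (Finset.mem_insert_of_mem hx'))
      rwa [Finset.sup_insert, sup_comm] at this
    exact h1.disjoint_sup_right_of_disjoint_sup_left h2

lemma aux_Icc_succ (a b : ℕ) (h : a ≤ b + 1) :
    Finset.Icc a (b + 1) = insert (b + 1) (Finset.Icc a b) := by
  ext x; simp only [Finset.mem_Icc, Finset.mem_insert]; omega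

/-- Two flags of length `k` are transversal iff they are derived from a grading of `M`;
moreover, if they are transversal, the corresponding grading is
`g j = e j ⊓ f (k + 1 - j)`. -/
theorem flags_transversal_iff_derived_from_grading
    {K M : Type*} [CommRing K] [AddCommGroup M] [Module K M]
    (k : ℕ) (e f : ℕ → Submodule K M) (he : IsFlag k e) (hf : IsFlag k f) :
    (Transversal k e f ↔ ∃ g : ℕ → Submodule K M, DerivedFrom k e f g) ∧
    (Transversal k e f → DerivedFrom k e f (fun j => e j ⊓ f (k + 1 - j))) := by
  obtain ⟨he0, hek, hemono⟩ := he
  obtain ⟨hf0, hfk, hfmono⟩ := hf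
  -- main forward implication
  have main : Transversal k e f → DerivedFrom k e f (fun j => e j ⊓ f (k + 1 - j)) := by
    intro hT
    set g : ℕ → Submodule K M := fun j => e j ⊓ f (k + 1 - j) with hg
    -- e j = sup of g over Icc 1 j
    have hE : ∀ j ≤ k, e j = (Finset.Icc 1 j).sup g := by
      intro j
      induction j with
      | zero => intro _; simp [he0]
      | succ j ih =>
        intro hjk
        rw [aux_Icc_succ 1 j (by omega), Finset.sup_insert, ← ih (by omega)]
        have h1 : k + 1 - (j + 1) = k - j := by omega
        have h2 : e j ≤ e (j + 1) := hemono j (j + 1) (by omega) hjk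
        have h3 : e j ⊔ f (k - j) = ⊤ :=
          (hT j (by omega)).codisjoint.eq_top
        have := sup_inf_assoc_of_le (f (k - j)) h2
        rw [hg]
        simp only [h1]
        rw [sup_comm, inf_comm (e (j + 1)) (f (k - j)), ← this, h3, top_inf_eq]
    -- f i = sup of g over Icc (k-i+1) k
    have hF : ∀ i ≤ k, f i = (Finset.Icc (k - i + 1) k).sup g := by
      intro i
      induction i with
      | zero => intro _; rw [Finset.Icc_eq_empty (by omega)]; simp [hf0]
      | succ i ih =>
        intro hik
        have h1 : k - (i + 1) + 1 = k - i := by omega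
        have h2 : k - i ≤ k := by omega
        have hins : Finset.Icc (k - i) k = insert (k - i) (Finset.Icc (k - i + 1) k) := by
          ext x; simp only [Finset.mem_Icc, Finset.mem_insert]; omega
        rw [h1, hins, Finset.sup_insert, ← ih (by omega)]
        have h3 : k + 1 - (k - i) = i + 1 := by omega
        have h4 : f i ≤ f (i + 1) := hfmono i (i + 1) (by omega) hik
        have h5 : e (k - i) ⊔ f i = ⊤ := by
          have := (hT (k - i) (by omega)).codisjoint.eq_top
          rwa [show k - (k - i) = i by omega] at this
        have hm := sup_inf_assoc_of_le (e (k - i)) h4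
        rw [hg]
        simp only [h3]
        rw [sup_comm, ← hm, sup_comm (f i), h5, top_inf_eq]
    have hgrad : IsGrading k g := by
      constructor
      · rw [← hE k le_rfl, hek]
      · intro j hj
        rw [Finset.mem_Icc] at hj
        -- erase sup is below e (j-1) ⊔ f (k-j)
        have hle : ((Finset.Icc 1 k).erase j).sup g ≤ e (j - 1) ⊔ f (k - j) := by
          apply Finset.sup_le
          intro m hm
          rw [Finset.mem_erase, Finset.mem_Icc] at hm
          obtain ⟨hne, hm1, hmk⟩ := hm
          rcases lt_or_gt_of_ne hne with hlt | hgt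
          · exact le_sup_of_le_left
              ((inf_le_left).trans (hemono m (j - 1) (by omega) (by omega)))
          · exact le_sup_of_le_right
              ((inf_le_right).trans (hfmono (k + 1 - m) (k - j) (by omega) (by omega)))
        refine Disjoint.mono_right hle ?_
        -- g j ⊓ (e (j-1) ⊔ f (k-j)) = ⊥
        have h2 : e (j - 1) ≤ e j := hemono (j - 1) j (by omega) hj.2
        have h3 : Disjoint (e j) (f (k - j)) := (hT j hj.2).disjoint
        have h4 : e j ⊓ (e (j - 1) ⊔ f (k - j)) = e (j - 1) := by
          rw [inf_comm (e j), sup_inf_assoc_of_le _ h2, inf_comm (f (k - j)), h3.eq_bot, sup_bot_eq]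
        have h5 : Disjoint (e (j - 1)) (f (k + 1 - j)) := by
          have := (hT (j - 1) (by omega)).disjoint
          rwa [show k - (j - 1) = k + 1 - j by omega] at this
        rw [disjoint_iff_inf_le]
        calc g j ⊓ (e (j - 1) ⊔ f (k - j))
            = f (k + 1 - j) ⊓ (e j ⊓ (e (j - 1) ⊔ f (k - j))) := by
              rw [hg]; simp only [← inf_assoc]; rw [inf_comm (e j) (f (k + 1 - j))]
          _ = f (k + 1 - j) ⊓ e (j - 1) := by rw [h4]
          _ ≤ ⊥ := by rw [inf_comm, h5.eq_bot]
    exact ⟨hgrad, hE, hF⟩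
  refine ⟨⟨fun hT => ⟨_, main hT⟩, ?_⟩, main⟩
  rintro ⟨g, ⟨hgsup, hgdis⟩, hE, hF⟩
  intro i hik
  have hei : e i = (Finset.Icc 1 i).sup g := hE i hik
  have hfi : f (k - i) = (Finset.Icc (i + 1) k).sup g := by
    rw [hF (k - i) (by omega), show k - (k - i) + 1 = i + 1 by omega]
  have hsub1 : Finset.Icc 1 i ⊆ Finset.Icc 1 k :=
    Finset.Icc_subset_Icc le_rfl hik
  have hsub2 : Finset.Icc (i + 1) k ⊆ Finset.Icc 1 k :=
    Finset.Icc_subset_Icc (by omega) le_rfl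
  have hdisj : Disjoint (Finset.Icc 1 i) (Finset.Icc (i + 1) k) := by
    rw [Finset.disjoint_left]
    intro x hx hx'
    rw [Finset.mem_Icc] at hx hx'; omega
  have hSI : (Finset.Icc 1 k).SupIndep g :=
    Finset.supIndep_iff_disjoint_erase.mpr hgdis
  constructor
  · rw [hei, hfi]
    exact aux_supIndep_disjoint_sup hSI _ _ hsub1 hsub2 hdisj
  · rw [codisjoint_iff, hei, hfi, ← Finset.sup_union, ← hgsup]
    congr 1
    ext x
    simp only [Finset.mem_union, Finset.mem_Icc]
    omega
end

section
/- Let K be a commutative unital ring, M a K-module, and f a flag of length k in M. Then the group U(f) acts simply transitively on the set of flags transversal to f: for any two flags e and e′ of length k that are both transversal to f, there exists a unique K-linear automorphism u of M satisfying (u − id)(f_i) ⊆ f_{i−1} for all i = 1, …, k and u(e_j) = e′_j for all j = 1, …, k. -/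
/-!
Let `π i` be the projection onto `e i` along `f (k - i)`. The differences `π (i + 1) - π i` split
every vector into pieces `z ∈ e (i + 1) ⊓ f (k - i)`. An element `u ∈ U(f)` with `u (e j) ⊆ e' j`
must send such a piece to the unique `y ∈ e' (i + 1)` with `y - z ∈ f (k - i - 1)`, i.e. to the
projection of `z` onto `e' (i + 1)` along `f (k - i - 1)`: this proves uniqueness. Conversely,
these projections assemble into linear maps `u` and `v` in `U(f)` carrying `e` into `e'` and `e'`
into `e`; by uniqueness `v ∘ u` and `u ∘ v` are the identity, so `u` is an automorphism with
`u (e j) = e' j`.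
-/

section UnipotentTransfer

variable {K M : Type*} [CommRing K] [AddCommGroup M] [Module K M] {k : ℕ}

lemma Submodule.map_comp_le {p q r : Submodule K M} {u v : M →ₗ[K] M} (hu : p.map u ≤ q)
    (hv : q.map v ≤ r) : p.map (v ∘ₗ u) ≤ r := by
  rw [Submodule.map_comp]
  exact (Submodule.map_mono hu).trans hv

lemma IsFlag.mono {f : ℕ → Submodule K M} (hf : IsFlag k f) {i j : ℕ} (hij : i ≤ j)
    (hj : j ≤ k) : f i ≤ f j :=
  hf.2.2 i j hij hj

/-- The group `U(f)`, as a predicate on endomorphisms. -/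
def IsFlagUnipotent (k : ℕ) (f : ℕ → Submodule K M) (u : M →ₗ[K] M) : Prop :=
  ∀ i : ℕ, 1 ≤ i → i ≤ k → Submodule.map (u - LinearMap.id) (f i) ≤ f (i - 1)

namespace IsFlagUnipotent

variable {f : ℕ → Submodule K M} {u v : M →ₗ[K] M}

lemma sub_mem (hu : IsFlagUnipotent k f u) {i : ℕ} (hi : 1 ≤ i) (hik : i ≤ k) {x : M}
    (hx : x ∈ f i) : u x - x ∈ f (i - 1) :=
  hu i hi hik ⟨x, hx, rfl⟩

lemma id : IsFlagUnipotent k f LinearMap.id := by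
  intro i _ _
  simp

lemma comp (hf : IsFlag k f) (hv : IsFlagUnipotent k f v) (hu : IsFlagUnipotent k f u) :
    IsFlagUnipotent k f (v ∘ₗ u) := by
  rintro i hi hik _ ⟨x, hx, rfl⟩
  have hux : u x ∈ f i := by
    simpa using add_mem (hf.mono (Nat.sub_le i 1) hik (hu.sub_mem hi hik hx)) hx
  have hsplit : (v ∘ₗ u - LinearMap.id : M →ₗ[K] M) x = (v (u x) - u x) + (u x - x) := by
    simp
  rw [hsplit]
  exact add_mem (hv.sub_mem hi hik hux) (hu.sub_mem hi hik hx)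

end IsFlagUnipotent

namespace Transversal

variable {e e' f : ℕ → Submodule K M}

/-- The projection onto `e i` along `f (k - i)`, and `0` for `i > k`. -/
noncomputable def proj (h : Transversal k e f) (i : ℕ) : M →ₗ[K] M :=
  if hi : i ≤ k then (e i).projection (f (k - i)) (h i hi) else 0

noncomputable def diffProj (h : Transversal k e f) (i : ℕ) : M →ₗ[K] M :=
  h.proj (i + 1) - h.proj i

variable (h : Transversal k e f) {i : ℕ}

lemma proj_of_le (hi : i ≤ k) : h.proj i = (e i).projection (f (k - i)) (h i hi) :=
  dif_pos hi

lemma proj_mem (hi : i ≤ k) (x : M) : h.proj i x ∈ e i := by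
  rw [h.proj_of_le hi]
  exact Submodule.projection_apply_mem _ x

lemma sub_proj_mem (hi : i ≤ k) (x : M) : x - h.proj i x ∈ f (k - i) := by
  rw [h.proj_of_le hi]
  exact Submodule.sub_projection_mem _ x

lemma proj_eq_self (hi : i ≤ k) {x : M} (hx : x ∈ e i) : h.proj i x = x := by
  rw [h.proj_of_le hi]
  exact Submodule.projection_apply_of_mem_left _ hx

lemma proj_eq_zero (hi : i ≤ k) {x : M} (hx : x ∈ f (k - i)) : h.proj i x = 0 := by
  rw [h.proj_of_le hi]
  exact Submodule.projection_apply_of_mem_right _ hx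

lemma diffProj_apply (x : M) : h.diffProj i x = h.proj (i + 1) x - h.proj i x :=
  rfl

lemma diffProj_mem_left (he : IsFlag k e) (hi : i < k) (x : M) : h.diffProj i x ∈ e (i + 1) :=
  sub_mem (h.proj_mem hi x) (he.mono i.le_succ hi (h.proj_mem hi.le x))

lemma diffProj_mem_right (hf : IsFlag k f) (hi : i < k) (x : M) : h.diffProj i x ∈ f (k - i) := by
  have hdiff : h.diffProj i x = (x - h.proj i x) - (x - h.proj (i + 1) x) := by
    rw [diffProj_apply]; abel
  rw [hdiff]
  exact sub_mem (h.sub_proj_mem hi.le x) (hf.mono (by omega) (by omega) (h.sub_proj_mem hi x))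

lemma diffProj_eq_zero_of_mem_left (he : IsFlag k e) (hi : i < k) {j : ℕ} (hji : j ≤ i) {x : M}
    (hx : x ∈ e j) : h.diffProj i x = 0 := by
  rw [diffProj_apply, h.proj_eq_self hi (he.mono (by omega) hi hx),
    h.proj_eq_self hi.le (he.mono hji hi.le hx), sub_self]

lemma diffProj_eq_zero_of_mem_right (hf : IsFlag k f) {m : ℕ} (hmi : m + i < k) {x : M}
    (hx : x ∈ f m) : h.diffProj i x = 0 := by
  rw [diffProj_apply, h.proj_eq_zero (by omega) (hf.mono (by omega) (by omega) hx),
    h.proj_eq_zero (by omega) (hf.mono (by omega) (by omega) hx), sub_self]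

lemma sum_diffProj (he : IsFlag k e) (hf : IsFlag k f) (x : M) :
    ∑ i ∈ Finset.range k, h.diffProj i x = x := by
  have hk : h.proj k x = x := by
    have hx := h.sub_proj_mem le_rfl x
    rw [Nat.sub_self, hf.1, Submodule.mem_bot, sub_eq_zero] at hx
    exact hx.symm
  have h0 : h.proj 0 x = 0 := by
    simpa [he.1] using h.proj_mem (Nat.zero_le k) x
  simp only [diffProj_apply]
  rw [Finset.sum_range_sub (fun i => h.proj i x), hk, h0, sub_zero]

lemma apply_eq_of_isFlagUnipotent (h' : Transversal k e' f) {u w : M →ₗ[K] M}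
    (hu : IsFlagUnipotent k f u) (hw : IsFlagUnipotent k f w)
    (hue : ∀ j ≤ k, (e j).map u ≤ e' j) (hwe : ∀ j ≤ k, (e j).map w ≤ e' j)
    (hi : i < k) {z : M} (hze : z ∈ e (i + 1)) (hzf : z ∈ f (k - i)) : u z = w z := by
  have hdiff_e' : u z - w z ∈ e' (i + 1) :=
    sub_mem (hue _ hi ⟨z, hze, rfl⟩) (hwe _ hi ⟨z, hze, rfl⟩)
  have hdiff_f : u z - w z ∈ f (k - (i + 1)) := by
    have hsplit : u z - w z = (u z - z) - (w z - z) := by abel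
    rw [hsplit, ← Nat.sub_sub]
    exact sub_mem (hu.sub_mem (by omega) (by omega) hzf) (hw.sub_mem (by omega) (by omega) hzf)
  exact sub_eq_zero.mp
    (Submodule.disjoint_def.mp (h' (i + 1) hi).disjoint _ hdiff_e' hdiff_f)

lemma eq_of_isFlagUnipotent (hef : Transversal k e f) (he'f : Transversal k e' f)
    (hf : IsFlag k f) (he : IsFlag k e) {u w : M →ₗ[K] M}
    (hu : IsFlagUnipotent k f u) (hw : IsFlagUnipotent k f w)
    (hue : ∀ j ≤ k, (e j).map u ≤ e' j) (hwe : ∀ j ≤ k, (e j).map w ≤ e' j) : u = w := by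
  ext x
  rw [← hef.sum_diffProj he hf x, map_sum, map_sum]
  refine Finset.sum_congr rfl fun i hi => ?_
  have hik := Finset.mem_range.mp hi
  exact he'f.apply_eq_of_isFlagUnipotent hu hw hue hwe hik
    (hef.diffProj_mem_left he hik x) (hef.diffProj_mem_right hf hik x)

/-- Sends the piece `e (i + 1) ⊓ f (k - i)` of a vector to its projection onto `e' (i + 1)`
along `f (k - i - 1)`. -/
noncomputable def transfer (h' : Transversal k e' f) : M →ₗ[K] M :=
  ∑ i ∈ Finset.range k, h'.proj (i + 1) ∘ₗ h.diffProj i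

variable (h' : Transversal k e' f)

lemma transfer_apply (x : M) :
    h.transfer h' x = ∑ i ∈ Finset.range k, h'.proj (i + 1) (h.diffProj i x) := by
  simp [transfer]

lemma map_transfer_le (he : IsFlag k e) (he' : IsFlag k e') {j : ℕ} (hj : j ≤ k) :
    (e j).map (h.transfer h') ≤ e' j := by
  rintro _ ⟨x, hx, rfl⟩
  rw [transfer_apply]
  refine Submodule.sum_mem _ fun i hi => ?_
  have hik := Finset.mem_range.mp hi
  rcases le_or_gt (i + 1) j with hij | hji
  · exact he'.mono hij hj (h'.proj_mem hik _)
  · rw [h.diffProj_eq_zero_of_mem_left he hik (by omega) hx, map_zero]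
    exact zero_mem _

lemma isFlagUnipotent_transfer (he : IsFlag k e) (hf : IsFlag k f) :
    IsFlagUnipotent k f (h.transfer h') := by
  intro m hm hmk
  rintro _ ⟨x, hx, rfl⟩
  have hsplit : (h.transfer h' - LinearMap.id : M →ₗ[K] M) x
      = ∑ i ∈ Finset.range k, (h'.proj (i + 1) (h.diffProj i x) - h.diffProj i x) := by
    rw [Finset.sum_sub_distrib, h.sum_diffProj he hf x, ← transfer_apply]
    rfl
  rw [hsplit]
  refine Submodule.sum_mem _ fun i hi => ?_
  have hik := Finset.mem_range.mp hi
  rcases lt_or_ge (m + i) k with hsmall | hlarge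
  · rw [h.diffProj_eq_zero_of_mem_right hf hsmall hx, map_zero, sub_zero]
    exact zero_mem _
  · rw [← neg_mem_iff, neg_sub]
    exact hf.mono (by omega) (by omega) (h'.sub_proj_mem hik _)

end Transversal

end UnipotentTransfer

/-- The group `U(f)` acts simply transitively on the set of flags transversal to `f`:
given flags `e`, `e'` both transversal to `f`, there is a unique automorphism `u` of `M`
with `(u - id)(f i) ⊆ f (i-1)` for `i = 1, …, k` mapping `e` to `e'`. -/
theorem unipotent_group_simply_transitive
    {K M : Type*} [CommRing K] [AddCommGroup M] [Module K M]
    (k : ℕ) (f e e' : ℕ → Submodule K M)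
    (hf : IsFlag k f) (he : IsFlag k e) (he' : IsFlag k e')
    (hef : Transversal k e f) (he'f : Transversal k e' f) :
    ∃! u : M ≃ₗ[K] M,
      (∀ i : ℕ, 1 ≤ i → i ≤ k →
        Submodule.map ((u : M →ₗ[K] M) - LinearMap.id) (f i) ≤ f (i - 1)) ∧
      (∀ j ≤ k, Submodule.map (u : M →ₗ[K] M) (e j) = e' j) := by
  set u := hef.transfer he'f
  set v := he'f.transfer hef
  have hu : IsFlagUnipotent k f u := hef.isFlagUnipotent_transfer he'f he hf
  have hv : IsFlagUnipotent k f v := he'f.isFlagUnipotent_transfer hef he' hf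
  have hue : ∀ j ≤ k, (e j).map u ≤ e' j := fun j hj => hef.map_transfer_le he'f he he' hj
  have hve : ∀ j ≤ k, (e' j).map v ≤ e j := fun j hj => he'f.map_transfer_le hef he' he hj
  have hvu : v ∘ₗ u = LinearMap.id :=
    hef.eq_of_isFlagUnipotent hef hf he (hv.comp hf hu) .id
      (fun j hj => Submodule.map_comp_le (hue j hj) (hve j hj))
      (fun j _ => (Submodule.map_id _).le)
  have huv : u ∘ₗ v = LinearMap.id :=
    he'f.eq_of_isFlagUnipotent he'f hf he' (hu.comp hf hv) .id
      (fun j hj => Submodule.map_comp_le (hve j hj) (hue j hj))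
      (fun j _ => (Submodule.map_id _).le)
  refine ⟨.ofLinearMap u v huv hvu, ⟨hu, fun j hj => (hue j hj).antisymm ?_⟩, ?_⟩
  · calc e' j = (e' j).map (u ∘ₗ v) := by rw [huv, Submodule.map_id]
      _ ≤ (e j).map u := Submodule.map_comp_le (hve j hj) le_rfl
  · rintro w ⟨hw, hwe⟩
    exact LinearEquiv.toLinearMap_injective
      (hef.eq_of_isFlagUnipotent he'f hf he hw hu (fun j hj => (hwe j hj).le) hue)
end

section
/- Let K be a commutative unital ring, M a K-module, (o, o′) a pair of transversal flags of length k in M, j ∈ {0, 1, …, k−1}, and e a submodule of M with o_j ⊆ e ⊆ o_{j+1}. Then for every u ∈ U(o′) the following are equivalent: (i) u(o_j) ⊆ e and e ⊆ u(o_{j+1}); (ii) u(e) = e. In other words, the set of u ∈ U(o′) whose image flag u(o) is governed by e in position j equals the intersection of U(o′) with the parabolic stabilizer P(e) = {g : g(e) = e}. -/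
/-- Let `(o, o')` be a transversal pair of flags of length `k`, `j < k`, and `e` a
submodule with `o j ⊆ e ⊆ o (j+1)`. For `u ∈ U(o')`, the image flag `u(o)` is governed
by `e` in position `j` iff `u(e) = e`. -/
theorem governed_iff_stabilizes
    {K M : Type*} [CommRing K] [AddCommGroup M] [Module K M]
    (k : ℕ) (o o' : ℕ → Submodule K M)
    (ho : IsFlag k o) (ho' : IsFlag k o') (htr : Transversal k o o')
    (j : ℕ) (hj : j < k) (e : Submodule K M)
    (he1 : o j ≤ e) (he2 : e ≤ o (j + 1))
    (u : M ≃ₗ[K] M)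
    (hu : ∀ i : ℕ, 1 ≤ i → i ≤ k →
      Submodule.map ((u : M →ₗ[K] M) - LinearMap.id) (o' i) ≤ o' (i - 1)) :
    (Submodule.map (u : M →ₗ[K] M) (o j) ≤ e ∧
        e ≤ Submodule.map (u : M →ₗ[K] M) (o (j + 1))) ↔
      Submodule.map (u : M →ₗ[K] M) e = e := by
  have hjk : j ≤ k := hj.le
  have hj1k : j + 1 ≤ k := hj
  -- `u` is surjective on each `o' i`
  have surj : ∀ i, i ≤ k → o' i ≤ Submodule.map (u : M →ₗ[K] M) (o' i) := by
    intro i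
    induction i with
    | zero => intro _; rw [ho'.1]; exact bot_le
    | succ i ih =>
      intro hik x hx
      have hi : i ≤ k := Nat.le_of_succ_le hik
      have hn : u x - x ∈ o' i := by
        have := hu (i + 1) (Nat.le_add_left 1 i) hik (Submodule.mem_map_of_mem hx)
        simpa using this
      obtain ⟨w, hw, hw2⟩ := ih hi hn
      refine ⟨x - w, Submodule.sub_mem _ hx (ho'.2.2 i (i + 1) (Nat.le_succ i) hik hw), ?_⟩
      simp only [LinearEquiv.coe_coe] at hw2 ⊢
      rw [map_sub, hw2]
      abel
  -- transversality facts
  have compl_j : IsCompl (o j) (o' (k - j)) := htr j hjk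
  have compl_j1 : IsCompl (o (j + 1)) (o' (k - (j + 1))) := htr (j + 1) hj1k
  have hsubsub : k - j - 1 = k - (j + 1) := by omega
  -- lowering on o' (k - j)
  have hlow : ∀ q ∈ o' (k - j), u q - q ∈ o' (k - (j + 1)) := by
    intro q hq
    have h1 : (1 : ℕ) ≤ k - j := by omega
    have := hu (k - j) h1 (Nat.sub_le k j) (Submodule.mem_map_of_mem hq)
    simpa [hsubsub] using this
  constructor
  · rintro ⟨h1, h2⟩
    -- key: u⁻¹ stabilizes e, i.e. u y ∈ e → y ∈ e
    have hpre : ∀ y : M, u y ∈ e → y ∈ e := by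
      intro y hy
      -- y ∈ o (j+1)
      have hyo : y ∈ o (j + 1) := by
        obtain ⟨z, hz, hz2⟩ := h2 hy
        simp only [LinearEquiv.coe_coe] at hz2
        have : z = y := u.injective hz2
        exact this ▸ hz
      -- decompose y = p + q
      have htop : y ∈ o j ⊔ o' (k - j) := by rw [compl_j.sup_eq_top]; trivial
      obtain ⟨p, hp, q, hq, hpq⟩ := Submodule.mem_sup.mp htop
      have hqo : q ∈ o (j + 1) := by
        have hpo : p ∈ o (j + 1) := ho.2.2 j (j + 1) (Nat.le_succ j) hj1k hp
        have : q = y - p := by rw [← hpq]; abel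
        rw [this]; exact Submodule.sub_mem _ hyo hpo
      have hupe : u p ∈ e := h1 (Submodule.mem_map_of_mem hp)
      have huqe : u q ∈ e := by
        have : u q = u y - u p := by rw [← hpq, map_add]; abel
        rw [this]; exact Submodule.sub_mem _ hy hupe
      have hnq : u q - q ∈ o' (k - (j + 1)) := hlow q hq
      have hnq' : u q - q ∈ o (j + 1) := Submodule.sub_mem _ (he2 huqe) hqo
      have hzero : u q - q = 0 :=
        (Submodule.disjoint_def.mp compl_j1.disjoint) _ hnq' hnq
      have hqe : q ∈ e := by
        have : q = u q := by
          have := sub_eq_zero.mp hzero; exact this.symm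
        rw [this]; exact huqe
      have : y = p + q := hpq.symm
      rw [this]; exact Submodule.add_mem _ (he1 hp) hqe
    refine le_antisymm ?_ ?_
    · rintro _ ⟨x, hx, rfl⟩
      simp only [LinearEquiv.coe_coe]
      -- decompose x = p + q
      have htop : x ∈ o j ⊔ o' (k - j) := by rw [compl_j.sup_eq_top]; trivial
      obtain ⟨p, hp, q, hq, hpq⟩ := Submodule.mem_sup.mp htop
      have hqe : q ∈ e := by
        have : q = x - p := by rw [← hpq]; abel
        rw [this]; exact Submodule.sub_mem _ hx (he1 hp)
      have hnq : u q - q ∈ o' (k - (j + 1)) := hlow q hq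
      -- u q - q also lies in map u (o (j+1))
      have huq : (u q : M) ∈ Submodule.map (u : M →ₗ[K] M) (o (j + 1)) :=
        Submodule.mem_map_of_mem (he2 hqe)
      have hq2 : q ∈ Submodule.map (u : M →ₗ[K] M) (o (j + 1)) := h2 hqe
      have hnq' : u q - q ∈ Submodule.map (u : M →ₗ[K] M) (o (j + 1)) :=
        Submodule.sub_mem _ huq hq2
      -- map u (o (j+1)) ∩ o' (k-(j+1)) = 0, via surjectivity of u on o' (k-(j+1))
      have hzero : u q - q = 0 := by
        obtain ⟨z, hz, hz2⟩ := hnq'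
        obtain ⟨w, hw, hw2⟩ := surj (k - (j + 1)) (Nat.sub_le k (j + 1)) hnq
        simp only [LinearEquiv.coe_coe] at hz2 hw2
        have : z = w := u.injective (by rw [hz2, hw2])
        have hzz : z ∈ o' (k - (j + 1)) := this ▸ hw
        have : z = 0 := (Submodule.disjoint_def.mp compl_j1.disjoint) _ hz hzz
        rw [← hz2, this, map_zero]
      have huqq : u q = q := sub_eq_zero.mp hzero
      have hupe : u p ∈ e := h1 (Submodule.mem_map_of_mem hp)
      have : u x = u p + u q := by rw [← hpq, map_add]
      rw [this, huqq]
      exact Submodule.add_mem _ hupe hqe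
    · intro x hx
      refine ⟨u.symm x, hpre _ (by simpa using hx), by simp⟩
  · intro heq
    constructor
    · calc Submodule.map (u : M →ₗ[K] M) (o j) ≤ Submodule.map (u : M →ₗ[K] M) e :=
            Submodule.map_mono he1
        _ = e := heq
    · rw [← heq]; exact Submodule.map_mono he2
end

section
/- Let K be a commutative unital ring in which 2, 3, …, k−1 are invertible, M a K-module, j ∈ {0, …, k−1} a fixed index, and e ⊆ M a fixed submodule. Let I be the set of all flags f of length k in M with f_j ⊆ e ⊆ f_{j+1}. Then I appears linearly in every chart of the flag geometry: for every pair (o, o′) of transversal flags of length k with o ∈ I, the set { X ∈ u(o′) : the flag (exp(X)(o_1), …, exp(X)(o_k)) satisfies exp(X)(o_j) ⊆ e ⊆ exp(X)(o_{j+1}) } is a K-submodule of the K-module of endomorphisms of M, where exp(X) = Σ_{i=0}^{k−1} (1/i!) X^i. -/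
/-- `exp X = ∑_{i=0}^{k-1} (1/i!) X^i`. -/
noncomputable def expE {K M : Type*} [CommRing K] [AddCommGroup M] [Module K M]
    (k : ℕ) (X : Module.End K M) : Module.End K M :=
  ∑ i ∈ Finset.range k, Ring.inverse ((Nat.factorial i : K)) • X ^ i

namespace FlagAux

variable {K M : Type*} [CommRing K] [AddCommGroup M] [Module K M]

lemma map_sum_le {ι : Type*} (s : Finset ι) (F : ι → Module.End K M)
    (W e : Submodule K M) (h : ∀ i ∈ s, Submodule.map (F i) W ≤ e) :
    Submodule.map (∑ i ∈ s, F i) W ≤ e := by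
  rintro x ⟨v, hv, rfl⟩
  rw [LinearMap.sum_apply]
  exact Submodule.sum_mem e fun i hi => h i hi ⟨v, hv, rfl⟩

lemma map_smul_le (c : K) (Y : Module.End K M) (W : Submodule K M) :
    Submodule.map (c • Y) W ≤ Submodule.map Y W := by
  rintro x ⟨v, hv, rfl⟩
  rw [LinearMap.smul_apply]
  exact Submodule.smul_mem _ c ⟨v, hv, rfl⟩

lemma map_add_le (Y Z : Module.End K M) (W e : Submodule K M)
    (hY : Submodule.map Y W ≤ e) (hZ : Submodule.map Z W ≤ e) :
    Submodule.map (Y + Z) W ≤ e := by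
  rintro x ⟨v, hv, rfl⟩
  rw [LinearMap.add_apply]
  exact add_mem (hY ⟨v, hv, rfl⟩) (hZ ⟨v, hv, rfl⟩)

lemma map_mul_le (Y Z : Module.End K M) (W W' e : Submodule K M)
    (hZ : Submodule.map Z W ≤ W') (hY : Submodule.map Y W' ≤ e) :
    Submodule.map (Y * Z) W ≤ e := by
  rintro x ⟨v, hv, rfl⟩
  exact hY ⟨Z v, hZ ⟨v, hv, rfl⟩, rfl⟩

/-- Submodule of endomorphisms stabilizing `e`. -/
def stab (e : Submodule K M) : Submodule K (Module.End K M) where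
  carrier := {Y | Submodule.map Y e ≤ e}
  add_mem' := fun ha hb => map_add_le _ _ _ _ ha hb
  zero_mem' := by rintro x ⟨v, hv, rfl⟩; simpa using Submodule.zero_mem e
  smul_mem' := fun c a ha => le_trans (map_smul_le c a e) ha

@[simp] lemma mem_stab {e : Submodule K M} {Y : Module.End K M} :
    Y ∈ stab e ↔ Submodule.map Y e ≤ e := Iff.rfl

/-- Submodule of endomorphisms lowering the flag `o'`. -/
def uSub (k : ℕ) (o' : ℕ → Submodule K M) : Submodule K (Module.End K M) where
  carrier := {X | ∀ i, 1 ≤ i → i ≤ k → Submodule.map X (o' i) ≤ o' (i - 1)}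
  add_mem' := fun ha hb => fun i h1 h2 => map_add_le _ _ _ _ (ha i h1 h2) (hb i h1 h2)
  zero_mem' := by
    intro i _ _
    rintro x ⟨v, hv, rfl⟩
    simpa using Submodule.zero_mem _
  smul_mem' := fun c a ha => fun i h1 h2 => le_trans (map_smul_le c a _) (ha i h1 h2)

@[simp] lemma mem_uSub {k : ℕ} {o' : ℕ → Submodule K M} {X : Module.End K M} :
    X ∈ uSub k o' ↔ ∀ i, 1 ≤ i → i ≤ k → Submodule.map X (o' i) ≤ o' (i - 1) := Iff.rfl

lemma stab_pow {e : Submodule K M} {Y : Module.End K M}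
    (hY : Submodule.map Y e ≤ e) (m : ℕ) : Submodule.map (Y ^ m) e ≤ e := by
  induction m with
  | zero =>
    rw [pow_zero]
    rintro x ⟨v, hv, rfl⟩
    simpa using hv
  | succ m ih => rw [pow_succ]; exact map_mul_le _ _ _ _ _ hY ih

lemma pow_map_le {k : ℕ} {o' : ℕ → Submodule K M} (ho' : IsFlag k o')
    {Y : Module.End K M} (hY : ∀ i, i ≤ k → Submodule.map Y (o' i) ≤ o' (i - 1)) :
    ∀ m i, i ≤ k → Submodule.map (Y ^ m) (o' i) ≤ o' (i - m) := by
  intro m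
  induction m with
  | zero =>
    intro i hi
    rw [pow_zero, Nat.sub_zero]
    rintro x ⟨v, hv, rfl⟩
    simpa using hv
  | succ m ih =>
    intro i hi
    rw [pow_succ]
    refine map_mul_le _ _ _ (o' (i - 1)) _ (hY i hi) ?_
    refine le_trans (ih (i - 1) (le_trans (Nat.sub_le _ _) hi)) ?_
    have : i - 1 - m = i - (m + 1) := by omega
    rw [this]

lemma pow_k_zero {k : ℕ} {o' : ℕ → Submodule K M} (ho' : IsFlag k o')
    {Y : Module.End K M} (hY : ∀ i, i ≤ k → Submodule.map Y (o' i) ≤ o' (i - 1)) :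
    Y ^ k = 0 := by
  have h := pow_map_le ho' hY k k le_rfl
  rw [ho'.2.1, Nat.sub_self, ho'.1] at h
  ext v
  simpa using h ⟨v, trivial, rfl⟩

lemma extend_hyp {k : ℕ} {o' : ℕ → Submodule K M} (ho' : IsFlag k o')
    {Y : Module.End K M} (hY : ∀ i, 1 ≤ i → i ≤ k → Submodule.map Y (o' i) ≤ o' (i - 1)) :
    ∀ i, i ≤ k → Submodule.map Y (o' i) ≤ o' (i - 1) := by
  intro i hi
  rcases Nat.eq_zero_or_pos i with rfl | hpos
  · rw [ho'.1]
    rintro x ⟨v, hv, rfl⟩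
    have hv0 : v = 0 := hv
    subst hv0
    rw [map_zero]
    exact Submodule.zero_mem _
  · exact hY i hpos hi

end FlagAux

namespace FlagAux

variable {K M : Type*} [CommRing K] [AddCommGroup M] [Module K M]

lemma expE_eq_one_add {k : ℕ} (hk : 1 ≤ k) (X : Module.End K M) :
    expE k X = 1 + ∑ i ∈ Finset.Ico 1 k, Ring.inverse ((Nat.factorial i : K)) • X ^ i := by
  rw [expE, Finset.range_eq_Ico, Finset.sum_eq_sum_Ico_succ_bot hk]
  simp

lemma N_map_le {k : ℕ} {o' : ℕ → Submodule K M} (ho' : IsFlag k o')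
    {X : Module.End K M} (hX : ∀ i, i ≤ k → Submodule.map X (o' i) ≤ o' (i - 1)) :
    ∀ i, i ≤ k →
      Submodule.map (∑ i ∈ Finset.Ico 1 k, Ring.inverse ((Nat.factorial i : K)) • X ^ i) (o' i)
        ≤ o' (i - 1) := by
  intro i hi
  refine map_sum_le _ _ _ _ ?_
  intro m hm
  rw [Finset.mem_Ico] at hm
  refine le_trans (map_smul_le _ _ _) (le_trans (pow_map_le ho' hX m i hi) ?_)
  exact ho'.2.2 (i - m) (i - 1) (by omega) (by omega)

/-- Easy direction: if `X ∈ u(o')` stabilizes `e`, the governance conditions hold. -/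
lemma conv_dir {k : ℕ} (hk : 1 ≤ k) {j : ℕ} (hj : j < k) {e : Submodule K M}
    {o o' : ℕ → Submodule K M} (ho : IsFlag k o) (ho' : IsFlag k o')
    (hg1 : o j ≤ e) (hg2 : e ≤ o (j + 1)) {X : Module.End K M}
    (hXu : ∀ i, 1 ≤ i → i ≤ k → Submodule.map X (o' i) ≤ o' (i - 1))
    (hXe : Submodule.map X e ≤ e) :
    Submodule.map (expE k X) (o j) ≤ e ∧ e ≤ Submodule.map (expE k X) (o (j + 1)) := by
  have hX' : ∀ i, i ≤ k → Submodule.map X (o' i) ≤ o' (i - 1) := extend_hyp ho' hXu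
  have hhe : Submodule.map (expE k X) e ≤ e := by
    rw [expE]
    refine map_sum_le _ _ _ _ ?_
    intro m _
    exact le_trans (map_smul_le _ _ _) (stab_pow hXe m)
  constructor
  · exact le_trans (Submodule.map_mono hg1) hhe
  · -- geometric series
    set A : Module.End K M := 1 - expE k X with hA
    have hAe : Submodule.map A e ≤ e := by
      rintro x ⟨v, hv, rfl⟩
      have : A v = v - (expE k X) v := by simp [hA]
      rw [this]
      exact sub_mem hv (hhe ⟨v, hv, rfl⟩)
    have hAmap : ∀ i, i ≤ k → Submodule.map A (o' i) ≤ o' (i - 1) := by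
      have : A = -(∑ i ∈ Finset.Ico 1 k, Ring.inverse ((Nat.factorial i : K)) • X ^ i) := by
        rw [hA, expE_eq_one_add hk]; abel
      rw [this]
      intro i hi
      rw [Submodule.map_neg]
      exact N_map_le ho' hX' i hi
    have hAk : A ^ k = 0 := pow_k_zero ho' hAmap
    intro v hv
    set w : M := ∑ n ∈ Finset.range k, (A ^ n) v with hw
    have hwe : w ∈ e := by
      refine Submodule.sum_mem e ?_
      intro n _
      exact stab_pow hAe n ⟨v, hv, rfl⟩
    have hwo : w ∈ o (j + 1) := hg2 hwe
    have hexp : (expE k X) w = v := by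
      have h1 : expE k X = 1 - A := by rw [hA, sub_sub_cancel]
      have h2 : A w = ∑ n ∈ Finset.range k, (A ^ (n + 1)) v := by
        rw [hw, map_sum]
        refine Finset.sum_congr rfl ?_
        intro n _
        rw [pow_succ']
        rfl
      have h3 : (expE k X) w = w - A w := by rw [h1]; simp
      rw [h3, hw, h2, ← Finset.sum_sub_distrib]
      have h4 : ∑ n ∈ Finset.range k, ((A ^ n) v - (A ^ (n + 1)) v)
          = (A ^ 0) v - (A ^ k) v := Finset.sum_range_sub' (fun n => (A ^ n) v) k
      rw [h4, hAk]
      simp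
    exact ⟨w, hwo, hexp⟩

end FlagAux

namespace FlagAux

variable {K M : Type*} [CommRing K] [AddCommGroup M] [Module K M]

/-- Hard direction: the governance conditions force `X` to stabilize `e`. -/
lemma key_dir {k : ℕ} (hk2 : 2 ≤ k) {j : ℕ} (hj : j < k) {e : Submodule K M}
    {o o' : ℕ → Submodule K M} (ho : IsFlag k o) (ho' : IsFlag k o')
    (htr : Transversal k o o') (hg1 : o j ≤ e) (hg2 : e ≤ o (j + 1))
    {X : Module.End K M}
    (hXu : ∀ i, 1 ≤ i → i ≤ k → Submodule.map X (o' i) ≤ o' (i - 1))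
    (hA : Submodule.map (expE k X) (o j) ≤ e)
    (hB : e ≤ Submodule.map (expE k X) (o (j + 1))) :
    Submodule.map X e ≤ e := by
  have hk1 : 1 ≤ k := by omega
  set c : ℕ → K := fun i => Ring.inverse ((Nat.factorial i : K)) with hc
  set N : Module.End K M := ∑ i ∈ Finset.Ico 1 k, c i • X ^ i with hN
  have hexp : expE k X = 1 + N := expE_eq_one_add hk1 X
  have hX' : ∀ i, i ≤ k → Submodule.map X (o' i) ≤ o' (i - 1) := extend_hyp ho' hXu
  have hNmap : ∀ i, i ≤ k → Submodule.map N (o' i) ≤ o' (i - 1) := N_map_le ho' hX'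
  have haddapp : ∀ v : M, (expE k X) v = v + N v := by
    intro v; rw [hexp]; simp
  -- complementarity facts
  have hsupj : o j ⊔ o' (k - j) = ⊤ := (htr j hj.le).sup_eq_top
  have hdisjj : o j ⊓ o' (k - j) = ⊥ := (htr j hj.le).inf_eq_bot
  have hdisj1 : o (j + 1) ⊓ o' (k - (j + 1)) = ⊥ := (htr (j + 1) hj).inf_eq_bot
  have hoj1 : o (j + 1) = o j ⊔ (o' (k - j) ⊓ o (j + 1)) := by
    have h1 : o j ≤ o (j + 1) := ho.2.2 j (j + 1) (by omega) hj
    rw [← sup_inf_assoc_of_le _ h1, hsupj, top_inf_eq]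
  have hedec : e = o j ⊔ (o' (k - j) ⊓ e) := by
    rw [← sup_inf_assoc_of_le _ hg1, hsupj, top_inf_eq]
  -- N annihilates o' (k-j) ⊓ e
  have hfix : ∀ u, u ∈ o' (k - j) → u ∈ e → N u = 0 := by
    intro u hu1 hu2
    obtain ⟨w, hw, hwu⟩ := hB hu2
    rw [hoj1] at hw
    obtain ⟨a, ha, u', hu', hw'⟩ := Submodule.mem_sup.mp hw
    have hha_e : (expE k X) a ∈ e := hA ⟨a, ha, rfl⟩
    have hNu'1 : N u' ∈ o' (k - (j + 1)) := by
      have h1 := hNmap (k - j) (Nat.sub_le _ _) ⟨u', hu'.1, rfl⟩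
      have heq : k - j - 1 = k - (j + 1) := by omega
      rwa [heq] at h1
    have hhw : (expE k X) a + (expE k X) u' = u := by
      rw [← map_add, hw', hwu]
    have hNu'e : N u' = u - (expE k X) a - u' := by
      have h1 : (expE k X) u' = u' + N u' := haddapp u'
      have h2 : (expE k X) u' = u - (expE k X) a := by
        rw [← hhw]; abel
      rw [h1] at h2
      rw [← h2]; abel
    have hNu'2 : N u' ∈ o (j + 1) := by
      rw [hNu'e]
      exact sub_mem (sub_mem (hg2 hu2) (hg2 hha_e)) hu'.2
    have hNu'0 : N u' = 0 := by
      have h1 : N u' ∈ o (j + 1) ⊓ o' (k - (j + 1)) := ⟨hNu'2, hNu'1⟩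
      rwa [hdisj1, Submodule.mem_bot] at h1
    have hhu' : (expE k X) u' = u' := by rw [haddapp, hNu'0, add_zero]
    have hha : (expE k X) a = u - u' := by
      rw [hhu'] at hhw
      rw [← hhw]; abel
    have hha_mem : (expE k X) a ∈ o' (k - j) := by
      rw [hha]; exact sub_mem hu1 hu'.1
    have hall : ∀ t, t ≤ j → a ∈ o' (k - t) := by
      intro t
      induction t with
      | zero =>
        intro _
        rw [Nat.sub_zero, ho'.2.1]
        exact Submodule.mem_top
      | succ t iht =>
        intro ht
        have h1 : a ∈ o' (k - t) := iht (by omega)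
        have h2 : N a ∈ o' (k - t - 1) := hNmap (k - t) (Nat.sub_le _ _) ⟨a, h1, rfl⟩
        have h3 : a = (expE k X) a - N a := by
          rw [haddapp]; abel
        rw [h3]
        have e1 : (expE k X) a ∈ o' (k - (t + 1)) :=
          ho'.2.2 (k - j) (k - (t + 1)) (by omega) (by omega) hha_mem
        have e2 : N a ∈ o' (k - (t + 1)) := by
          have heq : k - t - 1 = k - (t + 1) := by omega
          rwa [heq] at h2
        exact sub_mem e1 e2
    have ha0 : a = 0 := by
      have h1 : a ∈ o j ⊓ o' (k - j) := ⟨ha, hall j le_rfl⟩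
      rwa [hdisjj, Submodule.mem_bot] at h1
    have huu' : u = u' := by
      rw [ha0, map_zero] at hha
      have := hha.symm
      rwa [sub_eq_zero] at this
    rw [huu']
    exact hNu'0
  -- N stabilizes e
  have hNe : Submodule.map N e ≤ e := by
    refine le_trans (le_of_eq (congrArg (Submodule.map N) hedec)) ?_
    rw [Submodule.map_sup]
    refine sup_le ?_ ?_
    · rintro x ⟨a, ha, rfl⟩
      have h1 : N a = (expE k X) a - a := by rw [haddapp]; abel
      rw [h1]
      exact sub_mem (hA ⟨a, ha, rfl⟩) (hg1 ha)
    · rintro x ⟨u, hu, rfl⟩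
      rw [hfix u hu.1 hu.2]
      exact zero_mem e
  -- polynomial bookkeeping
  set T : Polynomial K := Polynomial.X with hT
  set n₀ : Polynomial K := ∑ i ∈ Finset.Ico 1 k, Polynomial.C (c i) * T ^ i with hn₀
  set u₀ : Polynomial K := ∑ i ∈ Finset.Ico 2 k, Polynomial.C (c i) * T ^ (i - 2) with hu₀
  have haev : Polynomial.aeval X n₀ = N := by
    rw [hn₀, hN, map_sum]
    refine Finset.sum_congr rfl ?_
    intro i _
    rw [map_mul, map_pow, Polynomial.aeval_C, hT, Polynomial.aeval_X, Algebra.smul_def]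
  have hfact : n₀ = T * (1 + T * u₀) := by
    have h1 : n₀ = Polynomial.C (c 1) * T ^ 1 + ∑ i ∈ Finset.Ico 2 k, Polynomial.C (c i) * T ^ i :=
      Finset.sum_eq_sum_Ico_succ_bot hk2 _
    have hc1 : c 1 = 1 := by simp [hc]
    have h2 : ∑ i ∈ Finset.Ico 2 k, Polynomial.C (c i) * T ^ i = T ^ 2 * u₀ := by
      rw [hu₀, Finset.mul_sum]
      refine Finset.sum_congr rfl ?_
      intro i hi
      rw [Finset.mem_Ico] at hi
      have h3 : T ^ 2 * (Polynomial.C (c i) * T ^ (i - 2)) = Polynomial.C (c i) * T ^ (2 + (i - 2)) := by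
        ring
      rw [h3]
      congr 2
      omega
    rw [h1, hc1, h2, Polynomial.C_1, one_mul, pow_one]
    ring
  have hXk : X ^ k = 0 := pow_k_zero ho' hX'
  have hNpow : ∀ m, Submodule.map (N ^ m) e ≤ e := stab_pow hNe
  have absorb : ∀ D, 1 ≤ D → (∀ m, 1 ≤ m → D ≤ m → Submodule.map (X ^ m) e ≤ e) →
      ∀ p : Polynomial K, Submodule.map (Polynomial.aeval X (T ^ D * p)) e ≤ e := by
    intro D hD hpow p
    induction p using Polynomial.induction_on' with
    | add p q hp hq =>
      rw [mul_add, map_add]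
      exact map_add_le _ _ _ _ hp hq
    | monomial s a =>
      have h1 : T ^ D * Polynomial.monomial s a = Polynomial.C a * T ^ (D + s) := by
        rw [← Polynomial.C_mul_X_pow_eq_monomial, hT]
        ring
      rw [h1, map_mul, map_pow, hT, Polynomial.aeval_X, Polynomial.aeval_C, ← Algebra.smul_def]
      exact le_trans (map_smul_le a _ e) (hpow (D + s) (by omega) (by omega))
  have main : ∀ t, ∀ m, 1 ≤ m → k - t ≤ m → Submodule.map (X ^ m) e ≤ e := by
    intro t
    induction t with
    | zero =>
      intro m hm1 hmk
      rw [Nat.sub_zero] at hmk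
      rw [pow_eq_zero_of_le hmk hXk]
      rintro x ⟨v, hv, rfl⟩
      rw [LinearMap.zero_apply]
      exact zero_mem e
    | succ t ih =>
      intro m hm1 hmk
      by_cases hcs : k - t ≤ m
      · exact ih m hm1 hcs
      · push_neg at hcs
        have hXm : X ^ m = Polynomial.aeval X (T ^ m) := by
          rw [hT, map_pow, Polynomial.aeval_X]
        have hTm : T ^ m = (n₀ + (-(T ^ 2 * u₀))) ^ m := by
          congr 1
          rw [hfact]; ring
        rw [hXm, hTm, add_pow, map_sum]
        refine map_sum_le _ _ _ _ ?_
        intro i hi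
        rw [Finset.mem_range] at hi
        by_cases him : i = m
        · subst him
          have h1 : n₀ ^ i * (-(T ^ 2 * u₀)) ^ (i - i) * ((i.choose i : ℕ) : Polynomial K) = n₀ ^ i := by
            rw [Nat.sub_self, pow_zero, Nat.choose_self, Nat.cast_one, mul_one, mul_one]
          rw [h1, map_pow, haev]
          exact hNpow i
        · have hilt : i < m := by omega
          obtain ⟨s, hs⟩ : ∃ s, m = i + s + 1 := ⟨m - i - 1, by omega⟩
          have hterm : n₀ ^ i * (-(T ^ 2 * u₀)) ^ (m - i) * ((m.choose i : ℕ) : Polynomial K)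
              = T ^ (m + 1) *
                (T ^ s * (1 + T * u₀) ^ i * (-u₀) ^ (s + 1) * ((m.choose i : ℕ) : Polynomial K)) := by
            have hmi : m - i = s + 1 := by omega
            have hpowi : n₀ ^ i = T ^ i * (1 + T * u₀) ^ i := by rw [hfact, mul_pow]
            rw [hpowi, hmi, hs]
            ring
          rw [hterm]
          exact absorb (m + 1) (by omega) (fun m' h1 h2 => ih m' h1 (by omega)) _
  have hfin := main (k - 1) 1 le_rfl (by omega)
  rwa [pow_one] at hfin

end FlagAux

/-- The set of flags governed by a submodule `e` in position `j` appears linearly in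
every chart of the flag geometry: for a transversal pair `(o, o')` with `o j ⊆ e ⊆ o (j+1)`,
the set of `X ∈ u(o')` such that the flag `exp(X)(o)` is again governed by `e` in
position `j` is a `K`-submodule of the endomorphisms of `M`. -/
theorem standard_intrinsic_subspace_linear_in_charts
    {K M : Type*} [CommRing K] [AddCommGroup M] [Module K M]
    (k : ℕ) (hk : ∀ i : ℕ, 2 ≤ i → i ≤ k - 1 → IsUnit (i : K))
    (j : ℕ) (hj : j < k) (e : Submodule K M)
    (o o' : ℕ → Submodule K M) (ho : IsFlag k o) (ho' : IsFlag k o')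
    (htr : Transversal k o o') (hgov1 : o j ≤ e) (hgov2 : e ≤ o (j + 1)) :
    ∃ S : Submodule K (Module.End K M),
      (S : Set (Module.End K M)) =
        {X : Module.End K M |
          (∀ i : ℕ, 1 ≤ i → i ≤ k → Submodule.map X (o' i) ≤ o' (i - 1)) ∧
          Submodule.map (expE k X) (o j) ≤ e ∧
          e ≤ Submodule.map (expE k X) (o (j + 1))} := by
  refine ⟨FlagAux.uSub k o' ⊓ FlagAux.stab e, ?_⟩
  ext X
  rw [SetLike.mem_coe, Submodule.mem_inf, FlagAux.mem_uSub, FlagAux.mem_stab, Set.mem_setOf_eq]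
  constructor
  · rintro ⟨hXu, hXe⟩
    have h := FlagAux.conv_dir (by omega) hj ho ho' hgov1 hgov2 hXu hXe
    exact ⟨hXu, h.1, h.2⟩
  · rintro ⟨hXu, hA, hB⟩
    refine ⟨hXu, ?_⟩
    rcases lt_or_ge k 2 with hk2 | hk2
    · have hk1 : k = 1 := by omega
      have hX1 : X ^ k = 0 := FlagAux.pow_k_zero ho' (FlagAux.extend_hyp ho' hXu)
      rw [hk1, pow_one] at hX1
      rw [hX1]
      rintro x ⟨v, hv, rfl⟩
      rw [LinearMap.zero_apply]
      exact zero_mem e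
    · exact FlagAux.key_dir hk2 hj ho ho' htr hgov1 hgov2 hXu hA hB
end

section
/- Let K be a commutative unital ring in which 2 and 3 are invertible and g a Lie algebra over K. Let f = (f_1 ⊆ f_0 ⊆ g) be a 3-filtration of g, and let e and e′ be 3-filtrations of g such that both (e, f) and (e′, f) are inner transversal pairs. Then there exists a unique x ∈ f_1 such that the automorphism e^{ad x} = id + ad(x) + (1/2)(ad x)^2 (well defined since (ad x)^3 = 0 for x ∈ f_1) maps e_1 onto e′_1 and e_0 onto e′_0. In other words, the vector group f_1 acts simply transitively on the set of inner 3-filtrations transversal to f. -/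
/-- A 3-filtration `f₁ ⊆ f₀ ⊆ g` of a Lie algebra. -/
def Is3Filtration {K L : Type*} [CommRing K] [LieRing L] [LieAlgebra K L]
    (f₁ f₀ : Submodule K L) : Prop :=
  f₁ ≤ f₀ ∧ (∀ x ∈ f₁, ∀ y ∈ f₁, ⁅x, y⁆ = (0 : L)) ∧
    (∀ x ∈ f₀, ∀ y ∈ f₀, ⁅x, y⁆ ∈ f₀) ∧
    (∀ x ∈ f₁, ∀ y ∈ f₀, ⁅x, y⁆ ∈ f₁) ∧
    (∀ x : L, ∀ y ∈ f₁, ⁅x, y⁆ ∈ f₀)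

/-- Two 3-filtrations `e`, `f` are transversal: `g = e₁ ⊕ f₀` and `g = e₀ ⊕ f₁`. -/
def Transversal3 {K L : Type*} [CommRing K] [LieRing L] [LieAlgebra K L]
    (e₁ e₀ f₁ f₀ : Submodule K L) : Prop :=
  IsCompl e₁ f₀ ∧ IsCompl e₀ f₁

/-- A transversal pair `(e, f)` of 3-filtrations is inner: there is an Euler element. -/
def InnerPair3 {K L : Type*} [CommRing K] [LieRing L] [LieAlgebra K L]
    (e₁ e₀ f₁ f₀ : Submodule K L) : Prop :=
  ∃ E : L, (∀ x ∈ e₁, ⁅E, x⁆ = x) ∧ (∀ x ∈ e₀ ⊓ f₀, ⁅E, x⁆ = (0 : L)) ∧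
    (∀ x ∈ f₁, ⁅E, x⁆ = -x)

/-- `e^{ad x} = id + ad x + (1/2) (ad x)²`. -/
noncomputable def expAd (K : Type*) {L : Type*} [CommRing K] [LieRing L] [LieAlgebra K L]
    (x : L) : Module.End K L :=
  1 + LieAlgebra.ad K L x + Ring.inverse (2 : K) • (LieAlgebra.ad K L x) ^ 2

/-!
An Euler element `E` of an inner pair `(e, f)` grades `g = e₁ ⊕ (e₀ ∩ f₀) ⊕ f₁`, with `ad E`
acting by `1, 0, -1`; as `2` is invertible, `e₁` and `e₀ ∩ f₀` are the `1`- and `0`-eigenspaces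
of `ad E`, so `E` and `f` determine `e`.

For `x ∈ f₁` we have `(ad x)³ = 0`, so (with `2` and `3` invertible) `e^{ad x}` is a Lie
automorphism; it fixes `f₁` pointwise, preserves `f₀`, and sends `E` to `E + x`. Given a second
inner pair `(e', f)` with Euler element `E'`, split `E - E' = b + c` along `g = e₀' ⊕ f₁`. Then
`e^{-ad c}` carries `(e, f)` to an inner pair with Euler element `E' + b`, and since `b ∈ e₀'`,
`E' + b` is also an Euler element of `(e', f)`, whence the transported pair is `e'`. Uniqueness:
`E + x = e^{ad x} E ∈ e₀'` pins down `x` modulo `e₀' ∩ f₁ = 0`.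
-/

section AdNilpotent

variable {K L : Type*} [CommRing K] [LieRing L] [LieAlgebra K L]

lemma expAd_apply (x z : L) :
    expAd K x z = z + ⁅x, z⁆ + Ring.inverse (2 : K) • ⁅x, ⁅x, z⁆⁆ := by
  simp [expAd, pow_two]

lemma inverse_two_add_inverse_two (h2 : IsUnit (2 : K)) :
    Ring.inverse (2 : K) + Ring.inverse 2 = 1 := by
  rw [← two_mul, Ring.mul_inverse_cancel _ h2]

lemma leibniz_lie_lie (x a b : L) :
    ⁅x, ⁅x, ⁅a, b⁆⁆⁆ = ⁅⁅x, ⁅x, a⁆⁆, b⁆ + 2 • ⁅⁅x, a⁆, ⁅x, b⁆⁆ + ⁅a, ⁅x, ⁅x, b⁆⁆⁆ := by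
  rw [leibniz_lie x a b, lie_add, leibniz_lie x ⁅x, a⁆ b, leibniz_lie x a ⁅x, b⁆]
  abel

variable {x : L}

/-- `(ad x)³ ⁅a, b⁆` is three times the left-hand side once `(ad x)³ a = (ad x)³ b = 0`. -/
lemma lie_lie_add_lie_lie_eq_zero (h3 : IsUnit (3 : K)) (hx : ∀ z : L, ⁅x, ⁅x, ⁅x, z⁆⁆⁆ = 0)
    (a b : L) : ⁅⁅x, ⁅x, a⁆⁆, ⁅x, b⁆⁆ + ⁅⁅x, a⁆, ⁅x, ⁅x, b⁆⁆⁆ = 0 := by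
  have h := hx ⁅a, b⁆
  rw [leibniz_lie_lie x a b, lie_add, lie_add, lie_nsmul, leibniz_lie x ⁅x, ⁅x, a⁆⁆ b, leibniz_lie x ⁅x, a⁆ ⁅x, b⁆,
    leibniz_lie x a ⁅x, ⁅x, b⁆⁆, hx, hx, zero_lie, lie_zero] at h
  rw [← h3.smul_eq_zero]
  linear_combination (norm := module) h

lemma lie_lie_lie_lie_eq_zero (h3 : IsUnit (3 : K)) (hx : ∀ z : L, ⁅x, ⁅x, ⁅x, z⁆⁆⁆ = 0)
    (a b : L) : ⁅⁅x, ⁅x, a⁆⁆, ⁅x, ⁅x, b⁆⁆⁆ = 0 := by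
  simpa [hx] using lie_lie_add_lie_lie_eq_zero h3 hx ⁅x, a⁆ b

lemma expAd_lie (h2 : IsUnit (2 : K)) (h3 : IsUnit (3 : K)) (hx : ∀ z : L, ⁅x, ⁅x, ⁅x, z⁆⁆⁆ = 0)
    (a b : L) : expAd K x ⁅a, b⁆ = ⁅expAd K x a, expAd K x b⁆ := by
  rw [expAd_apply, expAd_apply, expAd_apply, leibniz_lie_lie x a b, leibniz_lie x a b]
  simp only [add_lie, lie_add, smul_lie, lie_smul, smul_add]
  linear_combination (norm := module) inverse_two_add_inverse_two h2 • ⁅⁅x, a⁆, ⁅x, b⁆⁆ -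
    Ring.inverse (2 : K) • lie_lie_add_lie_lie_eq_zero h3 hx a b -
    (Ring.inverse (2 : K) * Ring.inverse (2 : K)) • lie_lie_lie_lie_eq_zero h3 hx a b

lemma expAd_neg_mul_self (h2 : IsUnit (2 : K)) (hx : ∀ z : L, ⁅x, ⁅x, ⁅x, z⁆⁆⁆ = 0) :
    expAd K (-x) * expAd K x = 1 := by
  ext z
  simp only [Module.End.mul_apply, expAd_apply, neg_lie, lie_add, lie_neg, lie_smul, hx, lie_zero,
    add_zero, neg_neg, Module.End.one_apply]
  linear_combination (norm := module) inverse_two_add_inverse_two h2 • ⁅x, ⁅x, z⁆⁆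

lemma expAd_mul_expAd_neg (h2 : IsUnit (2 : K)) (hx : ∀ z : L, ⁅x, ⁅x, ⁅x, z⁆⁆⁆ = 0) :
    expAd K x * expAd K (-x) = 1 := by
  have hnx : ∀ z : L, ⁅-x, ⁅-x, ⁅-x, z⁆⁆⁆ = 0 := fun z => by
    simp only [neg_lie, lie_neg, neg_neg, hx, neg_zero]
  simpa using expAd_neg_mul_self h2 hnx

noncomputable def expAdLieEquiv (h2 : IsUnit (2 : K)) (h3 : IsUnit (3 : K))
    (hx : ∀ z : L, ⁅x, ⁅x, ⁅x, z⁆⁆⁆ = 0) : L ≃ₗ⁅K⁆ L :=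
  { expAd K x with
    map_lie' := expAd_lie h2 h3 hx _ _
    invFun := expAd K (-x)
    left_inv := LinearMap.congr_fun (expAd_neg_mul_self h2 hx)
    right_inv := LinearMap.congr_fun (expAd_mul_expAd_neg h2 hx) }

end AdNilpotent

namespace Is3Filtration
variable {K L : Type*} [CommRing K] [LieRing L] [LieAlgebra K L] {f₁ f₀ : Submodule K L} {x : L}

lemma lie_mem_zero (hf : Is3Filtration f₁ f₀) (hx : x ∈ f₁) (z : L) : ⁅x, z⁆ ∈ f₀ := by
  rw [← lie_skew]
  exact f₀.neg_mem (hf.2.2.2.2 z x hx)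

lemma lie_lie_mem_one (hf : Is3Filtration f₁ f₀) (hx : x ∈ f₁) (z : L) : ⁅x, ⁅x, z⁆⁆ ∈ f₁ :=
  hf.2.2.2.1 x hx _ (hf.lie_mem_zero hx z)

lemma lie_lie_lie_eq_zero (hf : Is3Filtration f₁ f₀) (hx : x ∈ f₁) (z : L) :
    ⁅x, ⁅x, ⁅x, z⁆⁆⁆ = 0 :=
  hf.2.1 x hx _ (hf.lie_lie_mem_one hx z)

lemma expAd_apply_of_mem_one (hf : Is3Filtration f₁ f₀) (hx : x ∈ f₁) {y : L} (hy : y ∈ f₁) :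
    expAd K x y = y := by
  rw [expAd_apply, hf.2.1 x hx y hy, lie_zero, smul_zero, add_zero, add_zero]

lemma expAd_mem_zero (hf : Is3Filtration f₁ f₀) (hx : x ∈ f₁) {w : L} (hw : w ∈ f₀) :
    expAd K x w ∈ f₀ := by
  rw [expAd_apply]
  exact f₀.add_mem (f₀.add_mem hw (hf.1 (hf.2.2.2.1 x hx w hw)))
    (f₀.smul_mem _ (hf.1 (hf.lie_lie_mem_one hx w)))

lemma expAd_apply_eq_add (hf : Is3Filtration f₁ f₀) (hx : x ∈ f₁) {E : L} (hE : ⁅E, x⁆ = -x) :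
    expAd K x E = E + x := by
  rw [expAd_apply, ← lie_skew, hE, neg_neg, hf.2.1 x hx x hx, smul_zero, add_zero]

lemma eq_of_map_expAd_eq {e₀ e₀' : Submodule K L} (hf : Is3Filtration f₁ f₀) (hd : Disjoint e₀' f₁) {E : L}
    (hE : E ∈ e₀) (hEf : ∀ r ∈ f₁, ⁅E, r⁆ = -r) {x y : L} (hx : x ∈ f₁) (hy : y ∈ f₁)
    (hxe : e₀.map (expAd K x) = e₀') (hye : e₀.map (expAd K y) = e₀') : x = y := by
  have hEx : E + x ∈ e₀' := hxe ▸ ⟨E, hE, hf.expAd_apply_eq_add hx (hEf x hx)⟩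
  have hEy : E + y ∈ e₀' := hye ▸ ⟨E, hE, hf.expAd_apply_eq_add hy (hEf y hy)⟩
  rw [← sub_eq_zero]
  exact Submodule.disjoint_def.mp hd _ (by simpa using e₀'.sub_mem hEx hEy) (f₁.sub_mem hx hy)

lemma map_expAd_one (hf : Is3Filtration f₁ f₀) (hx : x ∈ f₁) : f₁.map (expAd K x) = f₁ := by
  ext y
  refine ⟨?_, fun hy => ⟨y, hy, hf.expAd_apply_of_mem_one hx hy⟩⟩
  rintro ⟨y, hy, rfl⟩
  rwa [hf.expAd_apply_of_mem_one hx hy]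

lemma map_expAd_zero (h2 : IsUnit (2 : K)) (hf : Is3Filtration f₁ f₀) (hx : x ∈ f₁) :
    f₀.map (expAd K x) = f₀ := by
  refine le_antisymm (Submodule.map_le_iff_le_comap.mpr fun w hw => hf.expAd_mem_zero hx hw)
    fun w hw => ⟨_, hf.expAd_mem_zero (neg_mem hx) hw, ?_⟩
  rw [← Module.End.mul_apply, expAd_mul_expAd_neg h2 (hf.lie_lie_lie_eq_zero hx),
    Module.End.one_apply]

end Is3Filtration

section EulerElement
variable {K L : Type*} [CommRing K] [LieRing L] [LieAlgebra K L]

structure IsEulerElement (e₁ e₀ f₁ f₀ : Submodule K L) (E : L) : Prop where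
  lie_eq_self : ∀ x ∈ e₁, ⁅E, x⁆ = x
  lie_eq_zero : ∀ x ∈ e₀ ⊓ f₀, ⁅E, x⁆ = 0
  lie_eq_neg : ∀ x ∈ f₁, ⁅E, x⁆ = -x

lemma InnerPair3.exists_isEulerElement {e₁ e₀ f₁ f₀ : Submodule K L}
    (h : InnerPair3 e₁ e₀ f₁ f₀) : ∃ E, IsEulerElement e₁ e₀ f₁ f₀ E :=
  h.imp fun _ ⟨h₁, h₀, hneg⟩ => ⟨h₁, h₀, hneg⟩

lemma Transversal3.map {L' : Type*} [LieRing L'] [LieAlgebra K L'] {e₁ e₀ f₁ f₀ : Submodule K L}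
    (h : Transversal3 e₁ e₀ f₁ f₀) (σ : L ≃ₗ⁅K⁆ L') :
    Transversal3 (e₁.map (σ : L →ₗ[K] L')) (e₀.map (σ : L →ₗ[K] L'))
      (f₁.map (σ : L →ₗ[K] L')) (f₀.map (σ : L →ₗ[K] L')) :=
  ⟨(Submodule.orderIsoMapComap (σ : L ≃ₗ[K] L')).isCompl h.1,
    (Submodule.orderIsoMapComap (σ : L ≃ₗ[K] L')).isCompl h.2⟩

lemma exists_mem_inf_add_mem_eq {p q r : Submodule K L} (hrq : r ≤ q) (hc : Codisjoint p r)
    {w : L} (hw : w ∈ q) : ∃ a ∈ p ⊓ q, ∃ b ∈ r, a + b = w := by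
  obtain ⟨a, b, ha, hb, rfl⟩ := Submodule.codisjoint_iff_exists_add_eq.mp hc w
  exact ⟨a, ⟨ha, by simpa using q.sub_mem hw (hrq hb)⟩, b, hb, rfl⟩

namespace IsEulerElement
variable {e₁ e₀ f₁ f₀ : Submodule K L} {E : L}

lemma map {L' : Type*} [LieRing L'] [LieAlgebra K L'] (hE : IsEulerElement e₁ e₀ f₁ f₀ E)
    (σ : L ≃ₗ⁅K⁆ L') :
    IsEulerElement (e₁.map (σ : L →ₗ[K] L')) (e₀.map (σ : L →ₗ[K] L'))
      (f₁.map (σ : L →ₗ[K] L')) (f₀.map (σ : L →ₗ[K] L')) (σ E) where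
  lie_eq_self := by
    rintro _ ⟨x, hx, rfl⟩
    exact (σ.map_lie E x).symm.trans (congrArg σ (hE.lie_eq_self x hx))
  lie_eq_zero := by
    rw [← Submodule.map_inf (σ : L →ₗ[K] L') σ.injective]
    rintro _ ⟨x, hx, rfl⟩
    exact (σ.map_lie E x).symm.trans ((congrArg σ (hE.lie_eq_zero x hx)).trans (map_zero σ))
  lie_eq_neg := by
    rintro _ ⟨x, hx, rfl⟩
    exact (σ.map_lie E x).symm.trans ((congrArg σ (hE.lie_eq_neg x hx)).trans (map_neg σ x))

lemma lie_mem_one (hE : IsEulerElement e₁ e₀ f₁ f₀ E) (hf₁ : f₁ ≤ f₀) (hc : Codisjoint e₀ f₁)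
    {w : L} (hw : w ∈ f₀) : ⁅E, w⁆ ∈ f₁ := by
  obtain ⟨q, hq, r, hr, rfl⟩ := exists_mem_inf_add_mem_eq hf₁ hc hw
  rw [lie_add, hE.lie_eq_zero q hq, hE.lie_eq_neg r hr, zero_add]
  exact neg_mem hr

lemma mem_of_lie_eq_zero (hE : IsEulerElement e₁ e₀ f₁ f₀ E) (hf₁ : f₁ ≤ f₀)
    (hc : Codisjoint e₀ f₁) {w : L} (hw : w ∈ f₀) (h : ⁅E, w⁆ = 0) : w ∈ e₀ := by
  obtain ⟨q, hq, r, hr, rfl⟩ := exists_mem_inf_add_mem_eq hf₁ hc hw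
  rw [lie_add, hE.lie_eq_zero q hq, hE.lie_eq_neg r hr, zero_add, neg_eq_zero] at h
  rw [h, add_zero]
  exact hq.1

lemma lie_sub_self_mem_zero (hE : IsEulerElement e₁ e₀ f₁ f₀ E) (hf₁ : f₁ ≤ f₀)
    (htr : Transversal3 e₁ e₀ f₁ f₀) (u : L) : ⁅E, u⁆ - u ∈ f₀ := by
  obtain ⟨p, w, hp, hw, rfl⟩ := Submodule.codisjoint_iff_exists_add_eq.mp htr.1.codisjoint u
  have h : ⁅E, p + w⁆ - (p + w) = ⁅E, w⁆ - w := by rw [lie_add, hE.lie_eq_self p hp]; abel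
  rw [h]
  exact f₀.sub_mem (hf₁ (hE.lie_mem_one hf₁ htr.2.codisjoint hw)) hw

lemma mem_of_lie_eq_self (hE : IsEulerElement e₁ e₀ f₁ f₀ E) (h2 : IsUnit (2 : K))
    (hf₁ : f₁ ≤ f₀) (htr : Transversal3 e₁ e₀ f₁ f₀) {u : L} (h : ⁅E, u⁆ = u) : u ∈ e₁ := by
  obtain ⟨p, w, hp, hw, rfl⟩ := Submodule.codisjoint_iff_exists_add_eq.mp htr.1.codisjoint u
  rw [lie_add, hE.lie_eq_self p hp, add_right_inj] at h
  have hw₁ : w ∈ f₁ := h ▸ hE.lie_mem_one hf₁ htr.2.codisjoint hw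
  have h2w : (2 : K) • w = 0 := by
    rw [two_smul]
    nth_rewrite 1 [← h]
    rw [hE.lie_eq_neg w hw₁, neg_add_cancel]
  rw [h2.smul_eq_zero.mp h2w, add_zero]
  exact hp

lemma mem_inf (hE : IsEulerElement e₁ e₀ f₁ f₀ E) (hf₁ : f₁ ≤ f₀)
    (htr : Transversal3 e₁ e₀ f₁ f₀) : E ∈ e₀ ⊓ f₀ := by
  obtain ⟨p, w, hp, hw, hpw⟩ := Submodule.codisjoint_iff_exists_add_eq.mp htr.1.codisjoint E
  have h : ⁅E, p + w⁆ = 0 := by rw [hpw]; exact lie_self E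
  rw [lie_add, hE.lie_eq_self p hp, add_eq_zero_iff_eq_neg] at h
  have hp₀ : p = 0 := Submodule.disjoint_def.mp htr.1.disjoint p hp
    (h ▸ neg_mem (hf₁ (hE.lie_mem_one hf₁ htr.2.codisjoint hw)))
  obtain rfl : w = E := by rw [← hpw, hp₀, zero_add]
  exact ⟨hE.mem_of_lie_eq_zero hf₁ htr.2.codisjoint hw (lie_self w), hw⟩

variable {e₁' e₀' : Submodule K L} {E' : L}

/-- `E' - E ∈ e₀` maps `e₁` into `e₁ ∩ f₀` and `e₀ ∩ f₀` into `e₀ ∩ f₁`, so it kills both. -/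
lemma of_sub_mem (hE : IsEulerElement e₁ e₀ f₁ f₀ E) (hE' : IsEulerElement e₁' e₀' f₁ f₀ E')
    (he : Is3Filtration e₁ e₀) (hf₁ : f₁ ≤ f₀) (htr : Transversal3 e₁ e₀ f₁ f₀)
    (htr' : Transversal3 e₁' e₀' f₁ f₀) (hb : E' - E ∈ e₀) : IsEulerElement e₁ e₀ f₁ f₀ E' where
  lie_eq_self p hp := by
    have hbp : ⁅E' - E, p⁆ = ⁅E', p⁆ - p := by rw [sub_lie, hE.lie_eq_self p hp]
    have hbp₀ : ⁅E' - E, p⁆ = 0 := Submodule.disjoint_def.mp htr.1.disjoint _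
      (by rw [← lie_skew]; exact neg_mem (he.2.2.2.1 p hp _ hb))
      (hbp ▸ hE'.lie_sub_self_mem_zero hf₁ htr' p)
    rwa [hbp, sub_eq_zero] at hbp₀
  lie_eq_zero q hq := by
    have hbq : ⁅E' - E, q⁆ = ⁅E', q⁆ := by rw [sub_lie, hE.lie_eq_zero q hq, sub_zero]
    rw [← hbq]
    exact Submodule.disjoint_def.mp htr.2.disjoint _ (he.2.2.1 _ hb q hq.1)
      (hbq ▸ hE'.lie_mem_one hf₁ htr'.2.codisjoint hq.2)
  lie_eq_neg := hE'.lie_eq_neg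

lemma le_of_isEulerElement (hE : IsEulerElement e₁ e₀ f₁ f₀ E)
    (hE' : IsEulerElement e₁' e₀' f₁ f₀ E) (h2 : IsUnit (2 : K)) (he : e₁ ≤ e₀)
    (he' : e₁' ≤ e₀') (hf₁ : f₁ ≤ f₀) (htr : Transversal3 e₁ e₀ f₁ f₀)
    (htr' : Transversal3 e₁' e₀' f₁ f₀) : e₁' ≤ e₁ ∧ e₀' ≤ e₀ := by
  have h₁ : e₁' ≤ e₁ := fun u hu => hE.mem_of_lie_eq_self h2 hf₁ htr (hE'.lie_eq_self u hu)
  refine ⟨h₁, fun u hu => ?_⟩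
  obtain ⟨p, w, hp, hw, rfl⟩ := Submodule.codisjoint_iff_exists_add_eq.mp htr'.1.codisjoint u
  have hw' : w ∈ e₀' := by simpa using e₀'.sub_mem hu (he' hp)
  exact e₀.add_mem (he (h₁ hp))
    (hE.mem_of_lie_eq_zero hf₁ htr.2.codisjoint hw (hE'.lie_eq_zero w ⟨hw', hw⟩))

lemma eq_of_isEulerElement (hE : IsEulerElement e₁ e₀ f₁ f₀ E)
    (hE' : IsEulerElement e₁' e₀' f₁ f₀ E) (h2 : IsUnit (2 : K)) (he : e₁ ≤ e₀)
    (he' : e₁' ≤ e₀') (hf₁ : f₁ ≤ f₀) (htr : Transversal3 e₁ e₀ f₁ f₀)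
    (htr' : Transversal3 e₁' e₀' f₁ f₀) : e₁ = e₁' ∧ e₀ = e₀' := by
  obtain ⟨h₁, h₀⟩ := hE.le_of_isEulerElement hE' h2 he he' hf₁ htr htr'
  obtain ⟨h₁', h₀'⟩ := hE'.le_of_isEulerElement hE h2 he' he hf₁ htr' htr
  exact ⟨le_antisymm h₁' h₁, le_antisymm h₀' h₀⟩

end IsEulerElement
end EulerElement

/-- The vector group `f₁` acts simply transitively on the set of inner 3-filtrations
transversal to `f`: given inner transversal pairs `(e, f)` and `(e', f)`, there is a
unique `x ∈ f₁` with `e^{ad x} (e₁) = e₁'` and `e^{ad x} (e₀) = e₀'`. -/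
theorem inner_three_filtrations_simply_transitive
    {K L : Type*} [CommRing K] [LieRing L] [LieAlgebra K L]
    (h2 : IsUnit (2 : K)) (h3 : IsUnit (3 : K))
    (f₁ f₀ e₁ e₀ e₁' e₀' : Submodule K L)
    (hf : Is3Filtration f₁ f₀) (he : Is3Filtration e₁ e₀) (he' : Is3Filtration e₁' e₀')
    (htr : Transversal3 e₁ e₀ f₁ f₀) (hin : InnerPair3 e₁ e₀ f₁ f₀)
    (htr' : Transversal3 e₁' e₀' f₁ f₀) (hin' : InnerPair3 e₁' e₀' f₁ f₀) :
    ∃! x : L, x ∈ f₁ ∧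
      Submodule.map (expAd K x : L →ₗ[K] L) e₁ = e₁' ∧
      Submodule.map (expAd K x : L →ₗ[K] L) e₀ = e₀' := by
  obtain ⟨E, hE⟩ := hin.exists_isEulerElement
  obtain ⟨E', hE'⟩ := hin'.exists_isEulerElement
  obtain ⟨b, c, hb, hc, hbc⟩ := Submodule.codisjoint_iff_exists_add_eq.mp htr'.2.codisjoint (E - E')
  have hx : -c ∈ f₁ := neg_mem hc
  let σ := expAdLieEquiv h2 h3 (hf.lie_lie_lie_eq_zero hx)
  have hσf₁ : f₁.map (σ : L →ₗ[K] L) = f₁ := hf.map_expAd_one hx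
  have hσf₀ : f₀.map (σ : L →ₗ[K] L) = f₀ := hf.map_expAd_zero h2 hx
  have hσE : σ E = E' + b := by
    change expAd K (-c) E = _
    rw [hf.expAd_apply_eq_add hx (hE.lie_eq_neg _ hx)]
    linear_combination (norm := module) (-1 : ℤ) • hbc
  have htrσ := htr.map σ
  have hEσ := hE.map σ
  rw [hσf₁, hσf₀] at htrσ hEσ
  rw [hσE] at hEσ
  have hE'b := hE'.of_sub_mem hEσ he' hf.1 htr' htrσ (by simpa using hb)
  obtain ⟨h₁, h₀⟩ :=
    hE'b.eq_of_isEulerElement hEσ h2 he'.1 (Submodule.map_mono he.1) hf.1 htr' htrσ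
  refine ⟨-c, ⟨hx, h₁.symm, h₀.symm⟩, fun y ⟨hy, _, hy₀⟩ => ?_⟩
  exact hf.eq_of_map_expAd_eq htr'.2.disjoint (hE.mem_inf hf.1 htr).1 hE.lie_eq_neg hy hx hy₀
    h₀.symm
end

section
/- Let K be a field and V a finite-dimensional K-vector space. Every left ideal I of the associative algebra End_K(V) — that is, every additive subgroup I with g ∘ f ∈ I for all g ∈ End_K(V) and f ∈ I — is of the form I = I_e = { f ∈ End_K(V) : e ⊆ ker f } for some subspace e ⊆ V. In particular, every left ideal of End_K(V) is principal, i.e. of the form End_K(V) ∘ g for a single element g. -/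
/-!
Choose `g ∈ I` whose kernel is minimal (subspaces of a finite-dimensional space satisfy the
descending chain condition). For `a, b ∈ I`, any `h` with `ker a ⊓ ker b ≤ ker h` factors through
`(a, b) : V → V × V`, hence is a left combination of `a` and `b` and lies in `I`; taking `h` with
kernel exactly `ker g ⊓ ker f`, minimality gives `ker g ≤ ker f` for every `f ∈ I`. Conversely
every `f` with `ker g ≤ ker f` factors as `x ∘ g`, so `I = I_{ker g} = End(V) ∘ g`.
-/

open LinearMap

section Factorization

variable {K M N P : Type*} [DivisionRing K] [AddCommGroup M] [Module K M]
  [AddCommGroup N] [Module K N] [AddCommGroup P] [Module K P]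

theorem LinearMap.exists_eq_comp_of_ker_le {f : M →ₗ[K] N} {h : M →ₗ[K] P}
    (hle : ker f ≤ ker h) : ∃ x : N →ₗ[K] P, h = x ∘ₗ f := by
  obtain ⟨x, hx⟩ := exists_extend ((ker f).liftQ h hle ∘ₗ f.quotKerEquivRange.symm.toLinearMap)
  refine ⟨x, LinearMap.ext fun v => ?_⟩
  simpa using (LinearMap.congr_fun hx ⟨f v, mem_range_self f v⟩).symm

theorem LinearMap.ker_le_ker_iff_exists_eq_comp {f : M →ₗ[K] N} {h : M →ₗ[K] P} :
    ker f ≤ ker h ↔ ∃ x : N →ₗ[K] P, h = x ∘ₗ f :=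
  ⟨exists_eq_comp_of_ker_le, fun ⟨x, hx⟩ => hx ▸ ker_le_ker_comp f x⟩

end Factorization

theorem Submodule.exists_end_ker_eq {K V : Type*} [DivisionRing K] [AddCommGroup V] [Module K V]
    (W : Submodule K V) : ∃ p : Module.End K V, ker p = W := by
  obtain ⟨q, hq⟩ := W.exists_isCompl
  refine ⟨q.subtype ∘ₗ q.projectionOnto W hq.symm, ?_⟩
  rw [ker_comp, Submodule.ker_subtype, Submodule.comap_bot, Submodule.ker_projectionOnto]

namespace Module.End

variable {K V : Type*} [DivisionRing K] [AddCommGroup V] [Module K V]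
  {I : Submodule (Module.End K V) (Module.End K V)}

theorem mem_of_ker_inf_ker_le {a b h : Module.End K V} (ha : a ∈ I) (hb : b ∈ I)
    (hle : ker a ⊓ ker b ≤ ker h) : h ∈ I := by
  obtain ⟨x, rfl⟩ := exists_eq_comp_of_ker_le (f := a.prod b) (h := h) (by rwa [ker_prod])
  have hsplit : x ∘ₗ a.prod b = (x ∘ₗ inl K V V) * a + (x ∘ₗ inr K V V) * b := by
    ext v
    simp [← map_add]
  rw [hsplit]
  exact I.add_mem (I.smul_mem _ ha) (I.smul_mem _ hb)

theorem exists_mem_ker_eq_inf {a b : Module.End K V} (ha : a ∈ I) (hb : b ∈ I) :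
    ∃ h ∈ I, ker h = ker a ⊓ ker b :=
  let ⟨h, hh⟩ := (ker a ⊓ ker b).exists_end_ker_eq
  ⟨h, mem_of_ker_inf_ker_le ha hb hh.ge, hh⟩

theorem exists_mem_forall_ker_le [FiniteDimensional K V] :
    ∃ g ∈ I, ∀ f ∈ I, ker g ≤ ker f := by
  obtain ⟨_, ⟨g, hg, rfl⟩, hmin⟩ :=
    wellFounded_lt.has_min (ker '' (I : Set (Module.End K V))) ⟨_, ⟨0, I.zero_mem, rfl⟩⟩
  refine ⟨g, hg, fun f hf => ?_⟩
  obtain ⟨h, hh, hker⟩ := exists_mem_ker_eq_inf hg hf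
  have : ¬ ker h < ker g := hmin _ ⟨h, hh, rfl⟩
  rw [hker, inf_lt_left] at this
  exact not_not.mp this

theorem mem_iff_ker_le {g f : Module.End K V} (hg : g ∈ I) (hmin : ∀ f ∈ I, ker g ≤ ker f) :
    f ∈ I ↔ ker g ≤ ker f := by
  refine ⟨hmin f, fun hle => ?_⟩
  obtain ⟨x, rfl⟩ := exists_eq_comp_of_ker_le hle
  exact I.smul_mem x hg

end Module.End

/-- Every left ideal of `End_K(V)` (`V` finite-dimensional over a field) is of the form
`I_e = { f : e ⊆ ker f }` for some subspace `e ⊆ V`; in particular it is principal. -/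
theorem left_ideal_of_endomorphism_algebra
    {K V : Type*} [Field K] [AddCommGroup V] [Module K V] [FiniteDimensional K V]
    (I : AddSubgroup (Module.End K V))
    (hI : ∀ g f : Module.End K V, f ∈ I → g * f ∈ I) :
    (∃ e : Submodule K V,
      (I : Set (Module.End K V)) = {f : Module.End K V | e ≤ LinearMap.ker f}) ∧
    (∃ g : Module.End K V,
      (I : Set (Module.End K V)) = {h : Module.End K V | ∃ x : Module.End K V, h = x * g}) := by
  let J : Submodule (Module.End K V) (Module.End K V) :=
    { I.toAddSubmonoid with smul_mem' := hI }
  obtain ⟨g, hg, hmin⟩ := Module.End.exists_mem_forall_ker_le (I := J)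
  have hI_eq : ∀ f, f ∈ I ↔ ker g ≤ ker f := fun f => Module.End.mem_iff_ker_le hg hmin
  exact ⟨⟨ker g, Set.ext hI_eq⟩,
    ⟨g, Set.ext fun f => (hI_eq f).trans ker_le_ker_iff_exists_eq_comp⟩⟩
end

section
/- Let K be a field of characteristic ≠ 2 and M, N finite-dimensional K-vector spaces. A K-linear subspace I of Hom_K(M, N) is an inner ideal (i.e. f ∘ y ∘ f ∈ I for all f ∈ I and all y ∈ Hom_K(N, M)) if and only if there exist subspaces e ⊆ M and h ⊆ N such that I = I_{e,h} = { f ∈ Hom_K(M, N) : e ⊆ ker f and im f ⊆ h }. -/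
/-!
Take `e = ⋂_{g ∈ I} ker g` and `h = ∑_{g ∈ I} im g`, so that `I ⊆ I_{e,h}`. Conversely, `I_{e,h}`
is spanned by the rank-one maps `φ ⊗ n` with `n ∈ h` and `φ ∈ e^⊥ = ∑_{g ∈ I} im gᵀ`, so it
suffices that `f ∘ (ψ ⊗ m) ∘ g = (ψ ∘ g) ⊗ f m` lies in `I` for `f, g ∈ I`. Linearizing
`f y f ∈ I` gives `f y g + g y f ∈ I` for `y = ψ ⊗ m`; applying the inner-ideal property once more
to this sum of two rank-one maps, with a suitable rank-one middle factor, isolates `f y g`, except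
when `f y g` is a multiple of `f y f` or of `g y g`.
-/

open Module LinearMap Submodule

namespace Submodule

def IsInnerIdeal {R M N : Type*} [CommRing R] [AddCommGroup M] [Module R M] [AddCommGroup N]
    [Module R N] (I : Submodule R (M →ₗ[R] N)) : Prop :=
  ∀ f ∈ I, ∀ y : N →ₗ[R] M, f ∘ₗ y ∘ₗ f ∈ I

end Submodule

section

variable {K V : Type*} [Field K] [AddCommGroup V] [Module K V]

theorem Module.exists_dual_eq_zero_and_eq_one_or_eq_smul (v w : V) :
    (∃ χ : Dual K V, χ v = 0 ∧ χ w = 1) ∨ ∃ c : K, w = c • v := by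
  by_cases hw : w ∈ K ∙ v
  · obtain ⟨c, rfl⟩ := mem_span_singleton.mp hw
    exact .inr ⟨c, rfl⟩
  obtain ⟨χ, hχw, hχ⟩ := exists_dual_map_eq_bot_of_notMem hw inferInstance
  have hχv : χ v = 0 := by simpa [Submodule.map_span] using hχ
  exact .inl ⟨(χ w)⁻¹ • χ, by simp [hχv], by simp [inv_mul_cancel₀ hχw]⟩

theorem Module.Dual.exists_eq_zero_and_eq_one_or_eq_smul (a b : Dual K V) :
    (∃ x : V, a x = 0 ∧ b x = 1) ∨ ∃ c : K, b = c • a := by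
  by_cases hab : ker a ≤ ker b
  · have hb := mem_span_of_iInf_ker_le_ker (L := fun _ : Unit => a) (K := b) (by simpa using hab)
    obtain ⟨c, hc⟩ := mem_span_singleton.mp (by simpa [Set.range_const] using hb)
    exact .inr ⟨c, hc.symm⟩
  obtain ⟨x, hxa, hxb⟩ := SetLike.not_le_iff_exists.mp hab
  exact .inl ⟨(b x)⁻¹ • x, by simp [mem_ker.mp hxa], by simp [inv_mul_cancel₀ hxb]⟩

end

theorem LinearMap.comp_smulRight_comp {R M₁ M₂ N₁ N₂ : Type*} [CommSemiring R]
    [AddCommMonoid M₁] [Module R M₁] [AddCommMonoid M₂] [Module R M₂]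
    [AddCommMonoid N₁] [Module R N₁] [AddCommMonoid N₂] [Module R N₂]
    (f : M₂ →ₗ[R] N₂) (ψ : Dual R N₁) (m : M₂) (g : M₁ →ₗ[R] N₁) :
    f ∘ₗ ψ.smulRight m ∘ₗ g = (ψ ∘ₗ g).smulRight (f m) := by
  ext x
  simp

section

variable {K M N : Type*} [Field K] [AddCommGroup M] [Module K M] [AddCommGroup N] [Module K N]

theorem LinearMap.mem_map₂_smulRightₗ_dualAnnihilator_ker_range [FiniteDimensional K M]
    (f : M →ₗ[K] N) : f ∈ map₂ smulRightₗ (ker f).dualAnnihilator (range f) := by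
  let c := Module.finBasis K (range f)
  have hf : ∑ i, smulRightₗ (c.coord i ∘ₗ f.rangeRestrict) (c i : N) = f := by
    ext x
    simp only [sum_apply, smulRightₗ_apply, smulRight_apply, comp_apply, Basis.coord_apply]
    simp_rw [← Submodule.coe_smul, ← Submodule.coe_sum, c.sum_repr]
    rfl
  have hsum : ∑ i, smulRightₗ (c.coord i ∘ₗ f.rangeRestrict) (c i : N) ∈
      map₂ smulRightₗ (ker f).dualAnnihilator (range f) :=
    sum_mem fun i _ => apply_mem_map₂ _ ((mem_dualAnnihilator _).2 fun x hx => by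
      simp [show f.rangeRestrict x = 0 from Subtype.ext hx]) (c i).2
  rwa [hf] at hsum

theorem Subspace.dualAnnihilator_iInf_ker_eq_iSup_range_dualMap [FiniteDimensional K M]
    {ι : Sort*} (g : ι → M →ₗ[K] N) :
    (⨅ i, ker (g i)).dualAnnihilator = ⨆ i, range (g i).dualMap := by
  rw [← Subspace.dualCoannihilator_dualAnnihilator_eq (W := ⨆ i, range (g i).dualMap),
    dualCoannihilator_iSup_eq]
  simp_rw [range_dualMap_eq_dualAnnihilator_ker, Subspace.dualAnnihilator_dualCoannihilator_eq]

end

namespace Submodule.IsInnerIdeal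

section CommRing

variable {R M N : Type*} [CommRing R] [AddCommGroup M] [Module R M] [AddCommGroup N] [Module R N]
  {I : Submodule R (M →ₗ[R] N)}

theorem comp_comp_add_comp_comp_mem (hI : I.IsInnerIdeal) {f g : M →ₗ[R] N} (hf : f ∈ I)
    (hg : g ∈ I) (y : N →ₗ[R] M) : f ∘ₗ y ∘ₗ g + g ∘ₗ y ∘ₗ f ∈ I := by
  convert I.sub_mem (I.sub_mem (hI _ (I.add_mem hf hg) y) (hI f hf y)) (hI g hg y) using 1
  simp only [add_comp, comp_add]
  abel

end CommRing

variable {K M N : Type*} [Field K] [AddCommGroup M] [Module K M] [AddCommGroup N] [Module K N]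
  {I : Submodule K (M →ₗ[K] N)}

theorem smulRight_mem (hI : I.IsInnerIdeal) {a b : Dual K M} {n₁ n₂ : N}
    (hbn₁ : b.smulRight n₁ ∈ I) (han₂ : a.smulRight n₂ ∈ I)
    (hsum : a.smulRight n₁ + b.smulRight n₂ ∈ I) : a.smulRight n₁ ∈ I := by
  have key (χ : Dual K N) (p : M) :
      (χ n₁ * a p) • a.smulRight n₁ + (χ n₂ * b p) • b.smulRight n₂ ∈ I := by
    convert I.sub_mem (I.sub_mem (hI _ hsum (χ.smulRight p)) (I.smul_mem (χ n₁ * b p) han₂))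
      (I.smul_mem (χ n₂ * a p) hbn₁) using 1
    ext x
    simp only [LinearMap.add_apply, LinearMap.smul_apply, coe_smulRight, LinearMap.sub_apply,
      coe_comp, Function.comp_apply, map_add, map_smul, smul_eq_mul, smul_add]
    module
  rcases exists_dual_eq_zero_and_eq_one_or_eq_smul (K := K) n₂ n₁ with ⟨χ, hχ₂, hχ₁⟩ | ⟨μ, rfl⟩
  · rcases b.exists_eq_zero_and_eq_one_or_eq_smul a with ⟨p, hb, ha⟩ | ⟨ν, rfl⟩
    · simpa [hχ₁, hχ₂, ha, hb] using key χ p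
    · convert I.smul_mem ν hbn₁ using 1
      ext; simp [smul_smul]
  · convert I.smul_mem μ han₂ using 1
    ext; simp [smul_smul, mul_comm]

theorem smulRight_comp_mem (hI : I.IsInnerIdeal) {f g : M →ₗ[K] N} (hf : f ∈ I) (hg : g ∈ I)
    (ψ : Dual K N) (m : M) : (ψ ∘ₗ g).smulRight (f m) ∈ I := by
  refine hI.smulRight_mem (b := ψ ∘ₗ f) (n₂ := g m) ?_ ?_ ?_ <;>
    simp only [← comp_smulRight_comp]
  · exact hI f hf _
  · exact hI g hg _
  · exact hI.comp_comp_add_comp_comp_mem hf hg _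

theorem map₂_smulRightₗ_iSup_le (hI : I.IsInnerIdeal) :
    map₂ smulRightₗ (⨆ g : I, range (g : M →ₗ[K] N).dualMap) (⨆ f : I, range (f : M →ₗ[K] N))
      ≤ I := by
  rw [map₂_iSup_left]
  refine iSup_le fun g => ?_
  rw [map₂_iSup_right]
  refine iSup_le fun f => map₂_le.2 ?_
  rintro _ ⟨ψ, rfl⟩ _ ⟨m, rfl⟩
  exact hI.smulRight_comp_mem f.2 g.2 ψ m

end Submodule.IsInnerIdeal

theorem inner_ideal_iff_Ieh_general
    {K M N : Type*} [Field K]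
    [AddCommGroup M] [Module K M] [AddCommGroup N] [Module K N]
    [FiniteDimensional K M]
    (I : Submodule K (M →ₗ[K] N)) :
    (∀ f ∈ I, ∀ y : N →ₗ[K] M, f ∘ₗ y ∘ₗ f ∈ I) ↔
      ∃ (e : Submodule K M) (h : Submodule K N),
        (I : Set (M →ₗ[K] N)) =
          {f : M →ₗ[K] N | e ≤ LinearMap.ker f ∧ LinearMap.range f ≤ h} := by
  constructor
  · intro hI
    let e (g : I) : Submodule K M := ker (g : M →ₗ[K] N)
    let h (g : I) : Submodule K N := range (g : M →ₗ[K] N)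
    refine ⟨⨅ g, e g, ⨆ g, h g,
      Set.ext fun f => ⟨fun hf => ⟨iInf_le e ⟨f, hf⟩, le_iSup h ⟨f, hf⟩⟩, ?_⟩⟩
    rintro ⟨hker, hrange⟩
    apply IsInnerIdeal.map₂_smulRightₗ_iSup_le hI
    rw [← Subspace.dualAnnihilator_iInf_ker_eq_iSup_range_dualMap]
    exact map₂_le_map₂ (dualAnnihilator_anti hker) hrange
      f.mem_map₂_smulRightₗ_dualAnnihilator_ker_range
  · rintro ⟨e, h, hI⟩ f hf y
    rw [← SetLike.mem_coe, hI] at hf ⊢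
    exact ⟨hf.1.trans ((ker_le_ker_comp f y).trans (ker_le_ker_comp _ f)),
      (range_comp_le_range _ f).trans hf.2⟩

/-- A linear subspace `I ⊆ Hom_K(M, N)` is an inner ideal (`f ∘ y ∘ f ∈ I` for all
`f ∈ I`, `y : N →ₗ M`) iff `I = I_{e,h} = { f : e ⊆ ker f, im f ⊆ h }` for some
subspaces `e ⊆ M`, `h ⊆ N`. -/
theorem inner_ideal_iff_Ieh
    {K M N : Type*} [Field K] (hchar : (2 : K) ≠ 0)
    [AddCommGroup M] [Module K M] [AddCommGroup N] [Module K N]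
    [FiniteDimensional K M] [FiniteDimensional K N]
    (I : Submodule K (M →ₗ[K] N)) :
    (∀ f ∈ I, ∀ y : N →ₗ[K] M, f ∘ₗ y ∘ₗ f ∈ I) ↔
      ∃ (e : Submodule K M) (h : Submodule K N),
        (I : Set (M →ₗ[K] N)) =
          {f : M →ₗ[K] N | e ≤ LinearMap.ker f ∧ LinearMap.range f ≤ h} :=
  inner_ideal_iff_Ieh_general I
end

section
/- Let K be a field of characteristic ≠ 2, M, N finite-dimensional K-vector spaces, and g ∈ Hom_K(M, N). Then the rank of g, i.e. dim(im g), equals the maximum of the lengths r of strictly increasing chains 0 = J_0 ⊊ J_1 ⊊ … ⊊ J_r = [g] in which every J_t is a principal inner ideal, i.e. J_t = [x_t] for some x_t ∈ Hom_K(M, N). -/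
/-- The principal inner ideal `[x] = { x ∘ y ∘ x : y ∈ Hom_K(N, M) }`. -/
def principalInnerIdeal {K M N : Type*} [Field K]
    [AddCommGroup M] [Module K M] [AddCommGroup N] [Module K N]
    (x : M →ₗ[K] N) : Set (M →ₗ[K] N) :=
  {w : M →ₗ[K] N | ∃ y : N →ₗ[K] M, w = x ∘ₗ y ∘ₗ x}

open LinearMap Module Submodule

section Aux

variable {K M N : Type*} [Field K]
    [AddCommGroup M] [Module K M] [AddCommGroup N] [Module K N]

/-- Every linear map between vector spaces has a generalized inverse. -/
lemma exists_geninv (x : M →ₗ[K] N) : ∃ h : N →ₗ[K] M, x ∘ₗ (h ∘ₗ x) = x := by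
  obtain ⟨π, hπ⟩ := (LinearMap.range x).subtype.exists_leftInverse_of_injective
    (Submodule.ker_subtype _)
  obtain ⟨σ, hσ⟩ := (LinearMap.ker x).mkQ.exists_rightInverse_of_surjective
    (Submodule.range_mkQ _)
  refine ⟨σ ∘ₗ (x.quotKerEquivRange.symm : LinearMap.range x →ₗ[K] M ⧸ LinearMap.ker x) ∘ₗ π,
    LinearMap.ext fun m => ?_⟩
  have h1 : π (x m) = x.quotKerEquivRange ((LinearMap.ker x).mkQ m) := by
    have := LinearMap.congr_fun hπ (x.quotKerEquivRange ((LinearMap.ker x).mkQ m))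
    simp only [LinearMap.comp_apply, Submodule.subtype_apply, LinearMap.id_apply] at this
    rw [← this, Submodule.mkQ_apply, LinearMap.quotKerEquivRange_apply_mk]
  simp only [LinearMap.comp_apply, h1, LinearEquiv.coe_coe, LinearEquiv.symm_apply_apply]
  have h2 : (LinearMap.ker x).mkQ (σ ((LinearMap.ker x).mkQ m)) = (LinearMap.ker x).mkQ m :=
    LinearMap.congr_fun hσ _
  rw [Submodule.mkQ_apply, Submodule.mkQ_apply, Submodule.Quotient.eq] at h2
  have h3 := (LinearMap.mem_ker).mp h2
  rw [map_sub, sub_eq_zero] at h3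
  simpa using h3

/-- Membership in a principal inner ideal is characterized by range and kernel conditions. -/
lemma mem_pii_iff (x w : M →ₗ[K] N) :
    w ∈ principalInnerIdeal x ↔
      LinearMap.range w ≤ LinearMap.range x ∧ LinearMap.ker x ≤ LinearMap.ker w := by
  constructor
  · rintro ⟨y, rfl⟩
    constructor
    · rintro n ⟨m, rfl⟩
      exact ⟨y (x m), rfl⟩
    · intro m hm
      simp only [LinearMap.mem_ker] at hm ⊢
      simp [hm]
  · rintro ⟨hr, hk⟩
    obtain ⟨h, hh⟩ := exists_geninv x
    refine ⟨h ∘ₗ w ∘ₗ h, LinearMap.ext fun m => ?_⟩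
    have e1 : x (h (x m)) = x m := LinearMap.congr_fun hh m
    have e2 : w (h (x m)) = w m := by
      have : h (x m) - m ∈ LinearMap.ker w := hk (by simp [LinearMap.mem_ker, map_sub, e1])
      have := LinearMap.mem_ker.mp this
      rw [map_sub, sub_eq_zero] at this
      exact this
    obtain ⟨m', hm'⟩ := hr ⟨m, rfl⟩
    have e3 : x (h (w m)) = w m := by
      rw [← hm']
      exact LinearMap.congr_fun hh m'
    simp only [LinearMap.comp_apply, e2, e3]

/-- Inclusion of principal inner ideals is characterized by range and kernel conditions. -/
lemma pii_subset_iff (x y : M →ₗ[K] N) :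
    principalInnerIdeal x ⊆ principalInnerIdeal y ↔
      LinearMap.range x ≤ LinearMap.range y ∧ LinearMap.ker y ≤ LinearMap.ker x := by
  constructor
  · intro h
    have hx : x ∈ principalInnerIdeal x := by
      obtain ⟨h', hh'⟩ := exists_geninv x
      exact ⟨h', hh'.symm⟩
    exact (mem_pii_iff y x).mp (h hx)
  · rintro ⟨hr, hk⟩ w hw
    obtain ⟨h1, h2⟩ := (mem_pii_iff x w).mp hw
    exact (mem_pii_iff y w).mpr ⟨h1.trans hr, hk.trans h2⟩

/-- Strict inclusion of principal inner ideals forces strict inequality of ranks. -/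
lemma pii_rank_lt [FiniteDimensional K M] {x y : M →ₗ[K] N}
    (h : principalInnerIdeal x ⊂ principalInnerIdeal y) :
    finrank K (LinearMap.range x) < finrank K (LinearMap.range y) := by
  obtain ⟨hr, hk⟩ := (pii_subset_iff x y).mp h.subset
  rcases lt_or_eq_of_le (Submodule.finrank_mono hr) with hlt | heq
  · exact hlt
  · exfalso
    apply h.ne
    have hrange : LinearMap.range x = LinearMap.range y :=
      Submodule.eq_of_le_of_finrank_le hr heq.ge
    have hkfr : finrank K (LinearMap.ker x) = finrank K (LinearMap.ker y) := by
      have e1 := LinearMap.finrank_range_add_finrank_ker x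
      have e2 := LinearMap.finrank_range_add_finrank_ker y
      omega
    have hker : LinearMap.ker y = LinearMap.ker x :=
      Submodule.eq_of_le_of_finrank_le hk hkfr.le
    apply Set.Subset.antisymm h.subset
    exact (pii_subset_iff y x).mpr ⟨hrange.ge, hker.ge⟩

lemma pii_zero : principalInnerIdeal (0 : M →ₗ[K] N) = {0} := by
  ext w
  simp [principalInnerIdeal]

/-- Construction of a maximal chain of principal inner ideals below `[g]`. -/
lemma exists_pii_chain [FiniteDimensional K M] [FiniteDimensional K N] (g : M →ₗ[K] N) :
    ∃ J : ℕ → Set (M →ₗ[K] N),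
      J 0 = {0} ∧ J (finrank K (LinearMap.range g)) = principalInnerIdeal g ∧
      (∀ t ≤ finrank K (LinearMap.range g), ∃ x, J t = principalInnerIdeal x) ∧
      (∀ t, t < finrank K (LinearMap.range g) → J t ⊂ J (t + 1)) := by
  classical
  set r := finrank K (LinearMap.range g) with hrdef
  let b : Basis (Fin r) K (LinearMap.range g) := Module.finBasis K _
  obtain ⟨π, hπ⟩ := (LinearMap.range g).subtype.exists_leftInverse_of_injective
    (Submodule.ker_subtype _)
  have hπ' : ∀ v : LinearMap.range g, π (v : N) = v := fun v => LinearMap.congr_fun hπ v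
  -- the independent family in N
  set v : Fin r → N := fun i => ((b i : N)) with hvdef
  have li : LinearIndependent K v :=
    b.linearIndependent.map' (LinearMap.range g).subtype (Submodule.ker_subtype _)
  -- truncation maps
  set p : ℕ → N →ₗ[K] N := fun t =>
    ∑ i ∈ Finset.univ.filter (fun i : Fin r => (i : ℕ) < t),
      (LinearMap.toSpanSingleton K N (v i)) ∘ₗ ((b.coord i) ∘ₗ π) with hpdef
  set x : ℕ → M →ₗ[K] N := fun t => (p t) ∘ₗ g with hxdef
  -- coefficient formula
  have hx_apply : ∀ t (m : M), x t m =
      ∑ i ∈ Finset.univ.filter (fun i : Fin r => (i : ℕ) < t),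
        (b.repr ⟨g m, LinearMap.mem_range_self g m⟩ i) • v i := by
    intro t m
    simp only [hxdef, hpdef, LinearMap.comp_apply, LinearMap.sum_apply]
    refine Finset.sum_congr rfl fun i _ => ?_
    have : π (g m) = ⟨g m, LinearMap.mem_range_self g m⟩ :=
      hπ' ⟨g m, LinearMap.mem_range_self g m⟩
    simp [this, LinearMap.toSpanSingleton_apply, Basis.coord_apply]
  -- x r = g
  have hxr : x r = g := by
    ext m
    rw [hx_apply]
    have hfil : Finset.univ.filter (fun i : Fin r => (i : ℕ) < r) = Finset.univ :=
      Finset.filter_true_of_mem (fun i _ => i.isLt)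
    rw [hfil]
    have : ∀ i : Fin r, (b.repr ⟨g m, LinearMap.mem_range_self g m⟩ i) • v i =
        (LinearMap.range g).subtype ((b.repr ⟨g m, LinearMap.mem_range_self g m⟩ i) • b i) := by
      intro i; simp [hvdef]
    rw [Finset.sum_congr rfl fun i _ => this i, ← map_sum, b.sum_repr]
    simp
  -- x 0 = 0
  have hx0 : x 0 = 0 := by
    ext m
    rw [hx_apply]
    simp
  -- kernels decrease along the chain
  have hker : ∀ t, LinearMap.ker (x (t + 1)) ≤ LinearMap.ker (x t) := by
    intro t m hm
    rw [LinearMap.mem_ker, hx_apply] at hm ⊢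
    have hc := linearIndependent_iff'.mp li _ _ hm
    refine Finset.sum_eq_zero fun i hi => ?_
    have hi' : i ∈ Finset.univ.filter (fun i : Fin r => (i : ℕ) < t + 1) := by
      simp only [Finset.mem_filter] at hi ⊢
      exact ⟨hi.1, by omega⟩
    rw [hc i hi', zero_smul]
  -- ranges of the chain maps
  have hrange : ∀ t, LinearMap.range (x t) = span K (v '' {i : Fin r | (i : ℕ) < t}) := by
    intro t
    apply le_antisymm
    · rintro n ⟨m, rfl⟩
      rw [hx_apply]
      refine Submodule.sum_mem _ fun i hi => Submodule.smul_mem _ _ (Submodule.subset_span ?_)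
      simp only [Finset.mem_filter] at hi
      exact ⟨i, hi.2, rfl⟩
    · rw [Submodule.span_le]
      rintro n ⟨i, hi, rfl⟩
      obtain ⟨m, hm⟩ : (v i) ∈ LinearMap.range g := (b i).2
      refine ⟨m, ?_⟩
      rw [hx_apply]
      have hrep : (⟨g m, LinearMap.mem_range_self g m⟩ : LinearMap.range g) = b i := by
        ext; simp [hm, hvdef]
      rw [Finset.sum_congr rfl (fun j _ => by rw [hrep])]
      have hi' : (i : ℕ) < t := hi
      rw [Finset.sum_eq_single_of_mem i (Finset.mem_filter.mpr ⟨Finset.mem_univ i, hi'⟩)]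
      · simp
      · intro j _ hj
        rw [b.repr_self, Finsupp.single_apply, if_neg (by exact fun h => hj h.symm), zero_smul]
  -- assemble the chain
  refine ⟨fun t => principalInnerIdeal (x t), ?_, ?_, fun t _ => ⟨x t, rfl⟩, ?_⟩
  · show principalInnerIdeal (x 0) = {0}
    rw [hx0, pii_zero]
  · show principalInnerIdeal (x r) = principalInnerIdeal g
    rw [hxr]
  · intro t ht
    have hsub : principalInnerIdeal (x t) ⊆ principalInnerIdeal (x (t + 1)) := by
      rw [pii_subset_iff]
      refine ⟨?_, hker t⟩
      rw [hrange, hrange]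
      exact Submodule.span_mono (Set.image_mono fun i (hi : (i : ℕ) < t) => by
        show (i : ℕ) < t + 1; omega)
    refine ⟨hsub, fun hle => ?_⟩
    have heq : LinearMap.range (x (t + 1)) ≤ LinearMap.range (x t) :=
      ((pii_subset_iff _ _).mp hle).1
    rw [hrange, hrange] at heq
    have hmem : v ⟨t, ht⟩ ∈ span K (v '' {i : Fin r | (i : ℕ) < t}) := by
      apply heq
      exact Submodule.subset_span ⟨⟨t, ht⟩, by simp, rfl⟩
    exact li.notMem_span_image (by simp) hmem

end Aux

/-- The rank of `g : M →ₗ[K] N` is the maximum of the lengths of strictly increasing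
chains `0 = J 0 ⊊ J 1 ⊊ … ⊊ J r = [g]` of principal inner ideals. -/
theorem rank_eq_max_chain_of_principal_inner_ideals
    {K M N : Type*} [Field K] (hchar : (2 : K) ≠ 0)
    [AddCommGroup M] [Module K M] [AddCommGroup N] [Module K N]
    [FiniteDimensional K M] [FiniteDimensional K N]
    (g : M →ₗ[K] N) :
    IsGreatest
      {r : ℕ | ∃ J : ℕ → Set (M →ₗ[K] N),
        J 0 = {0} ∧ J r = principalInnerIdeal g ∧
        (∀ t ≤ r, ∃ x : M →ₗ[K] N, J t = principalInnerIdeal x) ∧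
        (∀ t, t < r → J t ⊂ J (t + 1))}
      (Module.finrank K ↥(LinearMap.range g)) := by
  constructor
  · obtain ⟨J, h0, hr, hx, hs⟩ := exists_pii_chain g
    exact ⟨J, h0, hr, hx, hs⟩
  · rintro r ⟨J, h0, hr, hx, hs⟩
    have key : ∀ t, t ≤ r → ∀ x : M →ₗ[K] N, J t = principalInnerIdeal x →
        t ≤ Module.finrank K (LinearMap.range x) := by
      intro t
      induction t with
      | zero => intro _ _ _; exact Nat.zero_le _
      | succ t ih =>
        intro htr x hJx
        obtain ⟨xt, hxt⟩ := hx t (by omega)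
        have h1 := ih (by omega) xt hxt
        have h2 : principalInnerIdeal xt ⊂ principalInnerIdeal x := by
          rw [← hxt, ← hJx]
          exact hs t (by omega)
        have := pii_rank_lt h2
        omega
    exact key r le_rfl g hr
end

section
/- Let K be a field of characteristic ≠ 2, M, N finite-dimensional K-vector spaces, and (x, y) an idempotent in Hom_K(M, N) × Hom_K(N, M). Then the operator T : Hom_K(M, N) → Hom_K(M, N), T(z) = x ∘ y ∘ z + z ∘ y ∘ x, is diagonalizable with eigenvalues among 0, 1, 2: Hom_K(M, N) is the internal direct sum of the three subspaces V_i = { z : x ∘ y ∘ z + z ∘ y ∘ x = i • z } for i = 0, 1, 2 (the Peirce decomposition). -/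
/-- Peirce decomposition: for an idempotent pair `(x, y)`, the operator
`z ↦ x ∘ y ∘ z + z ∘ y ∘ x` on `Hom_K(M, N)` is diagonalizable with eigenvalues among
`0, 1, 2`: `Hom_K(M, N)` is the internal direct sum of the three eigenspaces. -/
theorem peirce_decomposition
    {K M N : Type*} [Field K] (hchar : (2 : K) ≠ 0)
    [AddCommGroup M] [Module K M] [AddCommGroup N] [Module K N]
    [FiniteDimensional K M] [FiniteDimensional K N]
    (x : M →ₗ[K] N) (y : N →ₗ[K] M)
    (hx : x ∘ₗ y ∘ₗ x = x) (hy : y ∘ₗ x ∘ₗ y = y) :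
    ∃ V : Fin 3 → Submodule K (M →ₗ[K] N),
      (∀ i : Fin 3, ∀ z : M →ₗ[K] N,
        z ∈ V i ↔ x ∘ₗ y ∘ₗ z + z ∘ₗ y ∘ₗ x = ((i : ℕ) : K) • z) ∧
      DirectSum.IsInternal V := by
  set e : N →ₗ[K] N := x ∘ₗ y with he
  set f : M →ₗ[K] M := y ∘ₗ x with hf
  have hee : e ∘ₗ e = e := by
    rw [he]
    calc (x ∘ₗ y) ∘ₗ x ∘ₗ y = (x ∘ₗ y ∘ₗ x) ∘ₗ y := by
          simp only [LinearMap.comp_assoc]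
      _ = x ∘ₗ y := by rw [hx]
  have hff : f ∘ₗ f = f := by
    rw [hf]
    calc (y ∘ₗ x) ∘ₗ y ∘ₗ x = (y ∘ₗ x ∘ₗ y) ∘ₗ x := by
          simp only [LinearMap.comp_assoc]
      _ = y ∘ₗ x := by rw [hy]
  have he' : ∀ n, e (e n) = e n := fun n => DFunLike.congr_fun hee n
  have hf' : ∀ m, f (f m) = f m := fun m => DFunLike.congr_fun hff m
  -- the operator T
  set T : Module.End K (M →ₗ[K] N) :=
    { toFun := fun z => e ∘ₗ z + z ∘ₗ f
      map_add' := fun a b => by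
        simp only [LinearMap.comp_add, LinearMap.add_comp]; abel
      map_smul' := fun c a => by
        simp only [LinearMap.comp_smul, LinearMap.smul_comp, RingHom.id_apply, smul_add] } with hT
  have hTapp : ∀ z : M →ₗ[K] N, T z = e ∘ₗ z + z ∘ₗ f := fun z => rfl
  refine ⟨fun i => T.eigenspace ((i : ℕ) : K), ?_, ?_⟩
  · intro i z
    rw [Module.End.mem_eigenspace_iff, hTapp]
    constructor <;> intro h <;> rw [← h] <;>
      simp only [he, hf, LinearMap.comp_assoc]
  · rw [DirectSum.isInternal_submodule_iff_iSupIndep_and_iSup_eq_top]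
    constructor
    · have hinj : Function.Injective (fun i : Fin 3 => ((i : ℕ) : K)) := by
        have h1 : (1 : K) ≠ 0 := one_ne_zero
        have h12 : (1 : K) ≠ 2 := fun h => one_ne_zero (α := K) (by linear_combination -h)
        intro i j hij
        fin_cases i <;> fin_cases j <;> simp_all
      exact T.eigenspaces_iSupIndep.comp hinj
    · rw [eq_top_iff]
      intro z _
      have key : z = ((LinearMap.id - e) ∘ₗ z ∘ₗ (LinearMap.id - f))
          + ((e ∘ₗ z ∘ₗ (LinearMap.id - f)) + ((LinearMap.id - e) ∘ₗ z ∘ₗ f))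
          + (e ∘ₗ z ∘ₗ f) := by
        simp only [LinearMap.sub_comp, LinearMap.comp_sub, LinearMap.id_comp,
          LinearMap.comp_id]
        abel
      rw [key]
      refine Submodule.add_mem _ (Submodule.add_mem _ ?_ ?_) ?_
      · refine Submodule.mem_iSup_of_mem (0 : Fin 3) ?_
        rw [Module.End.mem_eigenspace_iff, hTapp]
        ext m
        simp [he', hf', map_sub]
      · refine Submodule.mem_iSup_of_mem (1 : Fin 3) ?_
        rw [Module.End.mem_eigenspace_iff, hTapp]
        ext m
        simp [he', hf', map_sub]
      · refine Submodule.mem_iSup_of_mem (2 : Fin 3) ?_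
        rw [Module.End.mem_eigenspace_iff, hTapp]
        ext m
        simp [he', hf', map_sub, two_smul]
end

section
/- Let K be a field of characteristic ≠ 2 and M, N finite-dimensional K-vector spaces. For every g ∈ Hom_K(M, N) there exists an idempotent (x, y) ∈ Hom_K(M, N) × Hom_K(N, M) such that the principal inner ideal [g] = { g ∘ z ∘ g : z ∈ Hom_K(N, M) } equals the Peirce 2-space of (x, y), i.e. [g] = { w ∈ Hom_K(M, N) : x ∘ y ∘ w + w ∘ y ∘ x = 2 • w }. -/
/-!
Every linear map `g` between vector spaces is von Neumann regular: splitting `g` through its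
range gives `h` with `g h g = g`, and then `(g, h g h)` is an idempotent pair. For any `(x, y)`
with `x y x = x`, the maps `e = x y` and `f = y x` are idempotent; applying `e` on the left and
`f` on the right to `e w + w f = 2 w` gives `e w f = e w` and `e w f = w f`, so `2 w = 2 e w f`
and `w = x (y w y) x` once `2` is invertible.
-/

namespace LinearMap

variable {R M N : Type*}

section Semiring

variable [Semiring R] [AddCommMonoid M] [Module R M] [AddCommMonoid N] [Module R N]

def IsIdempotentPair (x : M →ₗ[R] N) (y : N →ₗ[R] M) : Prop :=
  x ∘ₗ y ∘ₗ x = x ∧ y ∘ₗ x ∘ₗ y = y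

theorem comp_comp_comp_of_comp_comp_eq_self {x : M →ₗ[R] N} {y : N →ₗ[R] M}
    (hx : x ∘ₗ y ∘ₗ x = x) {P : Type*} [AddCommMonoid P] [Module R P] (u : P →ₗ[R] M) :
    x ∘ₗ y ∘ₗ x ∘ₗ u = x ∘ₗ u := by
  simpa only [comp_assoc] using congrArg (· ∘ₗ u) hx

theorem isIdempotentPair_comp_comp {g : M →ₗ[R] N} {h : N →ₗ[R] M} (hg : g ∘ₗ h ∘ₗ g = g) :
    IsIdempotentPair g (h ∘ₗ g ∘ₗ h) := by
  simpa only [IsIdempotentPair, comp_assoc, comp_comp_comp_of_comp_comp_eq_self hg, and_true]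
    using hg

end Semiring

theorem exists_comp_comp_eq_self {K M N : Type*} [DivisionRing K]
    [AddCommGroup M] [Module K M] [AddCommGroup N] [Module K N] (g : M →ₗ[K] N) :
    ∃ h : N →ₗ[K] M, g ∘ₗ h ∘ₗ g = g := by
  obtain ⟨l, hl⟩ := (range g).subtype.exists_leftInverse_of_injective (Submodule.ker_subtype _)
  obtain ⟨r, hr⟩ := g.rangeRestrict.exists_rightInverse_of_surjective g.range_rangeRestrict
  refine ⟨r ∘ₗ l, ?_⟩
  calc g ∘ₗ (r ∘ₗ l) ∘ₗ g
      = (range g).subtype ∘ₗ (g.rangeRestrict ∘ₗ r) ∘ₗ (l ∘ₗ (range g).subtype) ∘ₗ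
          g.rangeRestrict := by ext; rfl
    _ = g := by rw [hl, hr]; ext; rfl

theorem exists_isIdempotentPair {K M N : Type*} [DivisionRing K]
    [AddCommGroup M] [Module K M] [AddCommGroup N] [Module K N] (g : M →ₗ[K] N) :
    ∃ y : N →ₗ[K] M, IsIdempotentPair g y :=
  let ⟨_, hg⟩ := exists_comp_comp_eq_self g
  ⟨_, isIdempotentPair_comp_comp hg⟩

section CommRing

variable [CommRing R] [AddCommGroup M] [Module R M] [AddCommGroup N] [Module R N]

def principalInnerIdeal (g : M →ₗ[R] N) : Set (M →ₗ[R] N) :=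
  {w | ∃ z : N →ₗ[R] M, w = g ∘ₗ z ∘ₗ g}

def peirceTwo (x : M →ₗ[R] N) (y : N →ₗ[R] M) : Set (M →ₗ[R] N) :=
  {w | x ∘ₗ y ∘ₗ w + w ∘ₗ y ∘ₗ x = (2 : R) • w}

variable {x : M →ₗ[R] N} {y : N →ₗ[R] M}

theorem principalInnerIdeal_subset_peirceTwo (hx : x ∘ₗ y ∘ₗ x = x) :
    principalInnerIdeal x ⊆ peirceTwo x y := by
  rintro _ ⟨z, rfl⟩
  simp only [peirceTwo, Set.mem_ofPred_eq, comp_assoc, comp_comp_comp_of_comp_comp_eq_self hx, hx,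
    two_smul]

theorem peirceTwo_subset_principalInnerIdeal (hx : x ∘ₗ y ∘ₗ x = x) (h2 : IsUnit (2 : R)) :
    peirceTwo x y ⊆ principalInnerIdeal x := by
  intro w hw
  have hleft : x ∘ₗ y ∘ₗ w ∘ₗ y ∘ₗ x = x ∘ₗ y ∘ₗ w := by
    have := congrArg (x ∘ₗ y ∘ₗ ·) hw
    simp only [comp_add, comp_comp_comp_of_comp_comp_eq_self hx, two_smul] at this
    exact add_left_cancel this
  have hright : x ∘ₗ y ∘ₗ w ∘ₗ y ∘ₗ x = w ∘ₗ y ∘ₗ x := by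
    have := congrArg (· ∘ₗ y ∘ₗ x) hw
    simp only [add_comp, comp_assoc, hx, two_smul] at this
    exact add_right_cancel this
  refine ⟨y ∘ₗ w ∘ₗ y, h2.smul_left_cancel.1 ?_⟩
  calc (2 : R) • w = x ∘ₗ y ∘ₗ w + w ∘ₗ y ∘ₗ x := hw.symm
    _ = x ∘ₗ y ∘ₗ w ∘ₗ y ∘ₗ x + x ∘ₗ y ∘ₗ w ∘ₗ y ∘ₗ x := congrArg₂ (· + ·) hleft.symm hright.symm
    _ = (2 : R) • (x ∘ₗ (y ∘ₗ w ∘ₗ y) ∘ₗ x) := by rw [two_smul]; simp only [comp_assoc]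

theorem principalInnerIdeal_eq_peirceTwo (hx : x ∘ₗ y ∘ₗ x = x) (h2 : IsUnit (2 : R)) :
    principalInnerIdeal x = peirceTwo x y :=
  (principalInnerIdeal_subset_peirceTwo hx).antisymm (peirceTwo_subset_principalInnerIdeal hx h2)

end CommRing

end LinearMap

theorem principal_inner_ideal_eq_peirce_two_space_general
    {K M N : Type*} [Field K] (hchar : (2 : K) ≠ 0)
    [AddCommGroup M] [Module K M] [AddCommGroup N] [Module K N]
    (g : M →ₗ[K] N) :
    ∃ (x : M →ₗ[K] N) (y : N →ₗ[K] M),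
      x ∘ₗ y ∘ₗ x = x ∧ y ∘ₗ x ∘ₗ y = y ∧
      {w : M →ₗ[K] N | ∃ z : N →ₗ[K] M, w = g ∘ₗ z ∘ₗ g} =
        {w : M →ₗ[K] N | x ∘ₗ y ∘ₗ w + w ∘ₗ y ∘ₗ x = (2 : K) • w} := by
  obtain ⟨y, hgyg, hygy⟩ := LinearMap.exists_isIdempotentPair g
  exact ⟨g, y, hgyg, hygy, LinearMap.principalInnerIdeal_eq_peirceTwo hgyg hchar.isUnit⟩

/-- Every principal inner ideal `[g]` of `Hom_K(M, N)` is the Peirce 2-space of some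
idempotent pair `(x, y)`. -/
theorem principal_inner_ideal_eq_peirce_two_space
    {K M N : Type*} [Field K] (hchar : (2 : K) ≠ 0)
    [AddCommGroup M] [Module K M] [AddCommGroup N] [Module K N]
    [FiniteDimensional K M] [FiniteDimensional K N]
    (g : M →ₗ[K] N) :
    ∃ (x : M →ₗ[K] N) (y : N →ₗ[K] M),
      x ∘ₗ y ∘ₗ x = x ∧ y ∘ₗ x ∘ₗ y = y ∧
      {w : M →ₗ[K] N | ∃ z : N →ₗ[K] M, w = g ∘ₗ z ∘ₗ g} =
        {w : M →ₗ[K] N | x ∘ₗ y ∘ₗ w + w ∘ₗ y ∘ₗ x = (2 : K) • w} :=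
  principal_inner_ideal_eq_peirce_two_space_general hchar g
end

section
/- Let K be a field of characteristic ≠ 2, M a finite-dimensional K-vector space, and α a nondegenerate symmetric bilinear form on M. Let Sym(M) = { f ∈ End_K(M) : α(f u, v) = α(u, f v) for all u, v ∈ M }. Then every inner ideal I of the Jordan pair (Sym(M), Sym(M)) — i.e. every K-subspace I ⊆ Sym(M) with f ∘ y ∘ f ∈ I for all f ∈ I and all y ∈ Sym(M) — is of the form I = I_e = { f ∈ Sym(M) : e ⊆ ker f } for some subspace e ⊆ M, and every such inner ideal is principal: I = { x ∘ y ∘ x : y ∈ Sym(M) } for some x ∈ Sym(M). -/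
/-!
For `w : V` let `Q w = rankOne α w` be the operator `u ↦ α w u • w`. For symmetric `f` one has
`f * Q v * f = Q (f v)`, and the linearized inner-ideal condition
`Q w * y * Q w' + Q w' * y * Q w = α w (y w') • S w w'`, where `S` is the polarization of `Q`.
Choosing `y = Q a` with `α w a ≠ 0 ≠ α a w'`, an inner ideal `I` contains `S w w'` whenever `w`
and `w'` lie in ranges of elements of `I`; by bilinearity this holds on the span `W` of these
ranges, and since `2` is invertible `I` contains `Q w` for all `w ∈ W`. Summing `Q` over a basis
of `W` gives `x ∈ I` with `ker x = Wᗮ`, which lies in the kernel of every element of `I`.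
Conversely, a symmetric `g` with `ker x ≤ ker g` equals `x * (t' * g * t) * x`, where
`x * t * x = x` and `t'` is the adjoint of `t`, so it lies in `I`.
-/

def IsSymOp {K V : Type*} [Field K] [AddCommGroup V] [Module K V]
    (α : V →ₗ[K] V →ₗ[K] K) (f : Module.End K V) : Prop :=
  ∀ u v : V, α (f u) v = α u (f v)

open LinearMap (ker)

theorem exists_apply_ne_zero_and_apply_ne_zero {R M N P : Type*} [Semiring R] [AddCommMonoid M]
    [AddCommMonoid N] [AddCommMonoid P] [Module R M] [Module R N] [Module R P]
    {φ : M →ₗ[R] N} {ψ : M →ₗ[R] P} (hφ : φ ≠ 0) (hψ : ψ ≠ 0) : ∃ a, φ a ≠ 0 ∧ ψ a ≠ 0 := by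
  obtain ⟨u, hu⟩ := DFunLike.ne_iff.mp hφ
  obtain ⟨u', hu'⟩ := DFunLike.ne_iff.mp hψ
  by_cases hu'φ : φ u' = 0
  · by_cases huψ : ψ u = 0
    · exact ⟨u + u', by simpa [hu'φ] using hu, by simpa [huψ] using hu'⟩
    · exact ⟨u, hu, huψ⟩
  · exact ⟨u', hu'φ, hu'⟩

theorem Module.End.exists_mul_mul_eq_self {K V : Type*} [DivisionRing K] [AddCommGroup V]
    [Module K V] (x : Module.End K V) : ∃ t : Module.End K V, x * t * x = x := by
  obtain ⟨s, hs⟩ := x.rangeRestrict.exists_rightInverse_of_surjective x.range_rangeRestrict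
  obtain ⟨t, ht⟩ := LinearMap.exists_extend s
  refine ⟨t, LinearMap.ext fun v => ?_⟩
  have := congr($hs ⟨x v, v, rfl⟩)
  simpa [← ht] using congr(Subtype.val $this)

section RankOne

variable {R M : Type*} [CommRing R] [AddCommGroup M] [Module R M] (α : M →ₗ[R] M →ₗ[R] R)

def rankOne (w : M) : Module.End R M := (α w).smulRight w

def polarRankOne : M →ₗ[R] M →ₗ[R] Module.End R M :=
  LinearMap.smulRightₗ ∘ₗ α + (LinearMap.smulRightₗ ∘ₗ α).flip

variable {α}

@[simp] theorem rankOne_apply (w u : M) : rankOne α w u = α w u • w := rfl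

@[simp] theorem polarRankOne_apply (w w' u : M) :
    polarRankOne α w w' u = α w u • w' + α w' u • w := rfl

theorem polarRankOne_self (w : M) : polarRankOne α w w = (2 : R) • rankOne α w := by
  ext u; simp [two_smul]

end RankOne

section SymOp

variable {K V : Type*} [Field K] [AddCommGroup V] [Module K V] {α : V →ₗ[K] V →ₗ[K] K}

theorem isSymOp_rankOne (hsymm : ∀ u v, α u v = α v u) (w : V) : IsSymOp α (rankOne α w) :=
  fun u v => by
    simp only [rankOne_apply, map_smul, LinearMap.smul_apply, smul_eq_mul, hsymm u w]
    ring

theorem IsSymOp.mul_rankOne_mul (hsymm : ∀ u v, α u v = α v u) {f : Module.End K V}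
    (hf : IsSymOp α f) (v : V) : f * rankOne α v * f = rankOne α (f v) := by
  ext u; simp [hsymm v, hf u v, hsymm u (f v)]

theorem rankOne_mul_mul_rankOne_add (hsymm : ∀ u v, α u v = α v u) {y : Module.End K V}
    (hy : IsSymOp α y) (w w' : V) :
    rankOne α w * y * rankOne α w' + rankOne α w' * y * rankOne α w =
      α w (y w') • polarRankOne α w w' := by
  have hyw : α w' (y w) = α w (y w') := by rw [hsymm, hy]
  ext u
  simp only [LinearMap.add_apply, Module.End.mul_apply, rankOne_apply, map_smul,
    LinearMap.smul_apply, polarRankOne_apply, smul_add, smul_smul, hyw]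
  module

theorem exists_isSymOp_eq_mul_mul [FiniteDimensional K V] (hsymm : ∀ u v, α u v = α v u)
    (hnd : α.SeparatingLeft) {x g : Module.End K V} (hx : IsSymOp α x) (hg : IsSymOp α g)
    (hker : ker x ≤ ker g) : ∃ y, IsSymOp α y ∧ g = x * y * x := by
  obtain ⟨t, hxtx⟩ := x.exists_mul_mul_eq_self
  have hα : α.Nondegenerate := ⟨hnd, fun v hv => hnd v fun w => (hsymm v w).trans (hv w)⟩
  obtain ⟨t', ht'⟩ : ∃ t' : Module.End K V, ∀ u v, α (t' u) v = α u (t v) :=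
    ⟨_, LinearMap.BilinForm.isAdjointPairLeftAdjointOfNondegenerate α hα t⟩
  have ht'' : ∀ u v, α u (t' v) = α (t u) v := fun u v => by rw [hsymm, ht', hsymm]
  have hgtx : ∀ v, g (t (x v)) = g v := fun v => by
    have : t (x v) - v ∈ ker g := hker (by simpa [sub_eq_zero] using congr($hxtx v))
    simpa [sub_eq_zero] using this
  have hxt'g : ∀ v, x (t' (g v)) = g v := fun v => sub_eq_zero.mp <| hnd _ fun w => by
    rw [map_sub, LinearMap.sub_apply, hx, ht', hg, hgtx, ← hg, sub_self]
  refine ⟨t' * g * t, fun u v => ?_, LinearMap.ext fun v => ?_⟩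
  · simp only [Module.End.mul_apply]
    rw [ht', hg, ht'']
  · simp [hgtx, hxt'g]

theorem apply_eq_zero_of_sum_rankOne_apply_eq_zero {ι : Type*} [Fintype ι] {W : Submodule K V}
    (b : Module.Basis ι K W) {u : V} (hu : (∑ i, rankOne α (b i : V)) u = 0) {w : V}
    (hw : w ∈ W) : α w u = 0 := by
  have hcoef : ∀ i, α (b i) u = 0 :=
    Fintype.linearIndependent_iff.mp (b.linearIndependent.map' W.subtype W.ker_subtype) _
      (by simpa [LinearMap.sum_apply] using hu)
  have hw_sum : ∑ i, b.repr ⟨w, hw⟩ i • (b i : V) = w := by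
    simpa only [Submodule.coe_sum, Submodule.coe_smul] using
      congr(Subtype.val $(b.sum_repr ⟨w, hw⟩))
  rw [← hw_sum]
  simp [hcoef]

variable (α) in
structure IsSymInnerIdeal (I : Submodule K (Module.End K V)) : Prop where
  isSymOp : ∀ f ∈ I, IsSymOp α f
  mul_mul_mem : ∀ f ∈ I, ∀ y, IsSymOp α y → f * y * f ∈ I

def rangeSpan (I : Submodule K (Module.End K V)) : Submodule K V :=
  Submodule.span K {w | ∃ f ∈ I, ∃ v, f v = w}

namespace IsSymInnerIdeal

variable {I : Submodule K (Module.End K V)}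

theorem mul_mul_add_mul_mul_mem (hI : IsSymInnerIdeal α I) {f g y : Module.End K V}
    (hf : f ∈ I) (hg : g ∈ I) (hy : IsSymOp α y) : f * y * g + g * y * f ∈ I := by
  have h := I.sub_mem (I.sub_mem (hI.mul_mul_mem _ (I.add_mem hf hg) y hy)
    (hI.mul_mul_mem f hf y hy)) (hI.mul_mul_mem g hg y hy)
  convert h using 1
  noncomm_ring

theorem rankOne_apply_mem (hsymm : ∀ u v, α u v = α v u) (hI : IsSymInnerIdeal α I)
    {f : Module.End K V} (hf : f ∈ I) (v : V) : rankOne α (f v) ∈ I := by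
  rw [← (hI.isSymOp f hf).mul_rankOne_mul hsymm]
  exact hI.mul_mul_mem f hf _ (isSymOp_rankOne hsymm v)

theorem polarRankOne_apply_apply_mem (hsymm : ∀ u v, α u v = α v u) (hnd : α.SeparatingLeft)
    (hI : IsSymInnerIdeal α I) {f f' : Module.End K V} (hf : f ∈ I) (hf' : f' ∈ I) (v v' : V) :
    polarRankOne α (f v) (f' v') ∈ I := by
  by_cases hw : α (f v) = 0
  · rw [hnd _ (LinearMap.congr_fun hw), map_zero, LinearMap.zero_apply]
    exact I.zero_mem
  by_cases hw' : α (f' v') = 0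
  · rw [hnd _ (LinearMap.congr_fun hw'), map_zero]
    exact I.zero_mem
  obtain ⟨a, ha, ha'⟩ := exists_apply_ne_zero_and_apply_ne_zero hw hw'
  have hc : α (f v) (rankOne α a (f' v')) ≠ 0 := by
    simpa [hsymm a] using mul_ne_zero ha' ha
  have h := hI.mul_mul_add_mul_mul_mem (hI.rankOne_apply_mem hsymm hf v)
    (hI.rankOne_apply_mem hsymm hf' v') (isSymOp_rankOne hsymm a)
  rw [rankOne_mul_mul_rankOne_add hsymm (isSymOp_rankOne hsymm a)] at h
  have := I.smul_mem (α (f v) (rankOne α a (f' v')))⁻¹ h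
  rwa [smul_smul, inv_mul_cancel₀ hc, one_smul] at this

theorem polarRankOne_mem (hsymm : ∀ u v, α u v = α v u) (hnd : α.SeparatingLeft)
    (hI : IsSymInnerIdeal α I) {w w' : V} (hw : w ∈ rangeSpan I) (hw' : w' ∈ rangeSpan I) :
    polarRankOne α w w' ∈ I := by
  have hle : Submodule.map₂ (polarRankOne α) (rangeSpan I) (rangeSpan I) ≤ I := by
    rw [rangeSpan, Submodule.map₂_span_span, Submodule.span_le]
    rintro _ ⟨_, ⟨f, hf, v, rfl⟩, _, ⟨f', hf', v', rfl⟩, rfl⟩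
    exact hI.polarRankOne_apply_apply_mem hsymm hnd hf hf' v v'
  exact hle (Submodule.apply_mem_map₂ _ hw hw')

theorem rankOne_mem (hchar : (2 : K) ≠ 0) (hsymm : ∀ u v, α u v = α v u)
    (hnd : α.SeparatingLeft) (hI : IsSymInnerIdeal α I) {w : V} (hw : w ∈ rangeSpan I) :
    rankOne α w ∈ I := by
  simpa [polarRankOne_self, hchar] using I.smul_mem (2 : K)⁻¹ (hI.polarRankOne_mem hsymm hnd hw hw)

theorem exists_mem_forall_ker_le [FiniteDimensional K V] (hchar : (2 : K) ≠ 0)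
    (hsymm : ∀ u v, α u v = α v u) (hnd : α.SeparatingLeft) (hI : IsSymInnerIdeal α I) :
    ∃ x ∈ I, ∀ f ∈ I, ker x ≤ ker f := by
  let b := Module.finBasis K (rangeSpan I)
  refine ⟨∑ i, rankOne α (b i : V),
    I.sum_mem fun i _ => hI.rankOne_mem hchar hsymm hnd (b i).2, fun f hf u hu => ?_⟩
  refine hnd (f u) fun v => ?_
  rw [hI.isSymOp f hf, hsymm]
  exact apply_eq_zero_of_sum_rankOne_apply_eq_zero b hu (Submodule.subset_span ⟨f, hf, v, rfl⟩)

end IsSymInnerIdeal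

end SymOp

/-- Every inner ideal of the Jordan pair `(Sym(V), Sym(V))` of symmetric operators with
respect to a nondegenerate symmetric bilinear form `α` on a finite-dimensional vector
space is of the form `I_e = { f ∈ Sym(V) : e ⊆ ker f }`, and it is principal. -/
theorem inner_ideal_of_symmetric_operators
    {K V : Type*} [Field K] (hchar : (2 : K) ≠ 0)
    [AddCommGroup V] [Module K V] [FiniteDimensional K V]
    (α : V →ₗ[K] V →ₗ[K] K)
    (hsymm : ∀ u v : V, α u v = α v u)
    (hnd : ∀ v : V, (∀ w : V, α v w = 0) → v = 0)
    (I : Submodule K (Module.End K V))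
    (hIsym : ∀ f ∈ I, IsSymOp α f)
    (hinner : ∀ f ∈ I, ∀ y : Module.End K V, IsSymOp α y → f * y * f ∈ I) :
    (∃ e : Submodule K V,
      (I : Set (Module.End K V)) =
        {f : Module.End K V | IsSymOp α f ∧ e ≤ LinearMap.ker f}) ∧
    (∃ x : Module.End K V, IsSymOp α x ∧
      (I : Set (Module.End K V)) =
        {w : Module.End K V | ∃ y : Module.End K V, IsSymOp α y ∧ w = x * y * x}) := by
  obtain ⟨x, hxI, hker⟩ :=
    IsSymInnerIdeal.exists_mem_forall_ker_le hchar hsymm hnd ⟨hIsym, hinner⟩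
  have hx := hIsym x hxI
  have hIker : (I : Set (Module.End K V)) = {f | IsSymOp α f ∧ ker x ≤ ker f} := by
    refine Set.Subset.antisymm (fun f hf => ⟨hIsym f hf, hker f hf⟩) ?_
    rintro g ⟨hg, hxg⟩
    obtain ⟨y, hy, rfl⟩ := exists_isSymOp_eq_mul_mul hsymm hnd hx hg hxg
    exact hinner x hxI y hy
  refine ⟨⟨ker x, hIker⟩, x, hx, Set.Subset.antisymm (fun f hf => ?_) ?_⟩
  · rw [hIker] at hf
    exact exists_isSymOp_eq_mul_mul hsymm hnd hx hf.1 hf.2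
  · rintro _ ⟨y, hy, rfl⟩
    exact hinner x hxI y hy
end
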